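/- arXiv:2202.02770 — 3 statements merged into one kernel-verified Lean document; each statement's English description precedes it below -/
import Mathlib

section
/- If H=(X,S) is a t-quasi-linear hypergraph with at least one edge, then there exists an r(H)-uniform, Δ(H)-regular, t-quasi-linear hypergraph H*=(X*,S*) together with an injection f:S→S* such that X⊆X* and, for every edge s∈S, s⊆f(s) and f(s)∩X=s (so H embeds into H* with each edge of H obtained from the corresponding edge of H* by restricting to X). -/
structure Hypergraph' (V : Type*) where
  verts : Finset V
  edges : Finset (Finset V)
  edge_sub : ∀ s ∈ edges, s ⊆ verts
  edge_nonempty : ∀ s ∈ edges, s.Nonempty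

namespace Hypergraph'

variable {V : Type*} [DecidableEq V]

/-- The degree of a vertex: the number of edges containing it. -/
def degree (H : Hypergraph' V) (x : V) : ℕ :=
  (H.edges.filter fun s => x ∈ s).card

/-- Δ(H): the maximum degree. -/
def maxDegree (H : Hypergraph' V) : ℕ :=
  H.verts.sup H.degree

/-- r(H): the maximum cardinality of an edge. -/
def rank (H : Hypergraph' V) : ℕ :=
  H.edges.sup Finset.card

/-- An incidence of H: a pair (x, s) with s an edge and x ∈ s. -/
def IsIncidence (H : Hypergraph' V) (p : V × Finset V) : Prop :=
  p.2 ∈ H.edges ∧ p.1 ∈ p.2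

/-- Two (distinct) incidences (x,s), (x',s') are adjacent if x = x', or {x,x'} ⊆ s,
or {x,x'} ⊆ s'. -/
def IncAdj (p q : V × Finset V) : Prop :=
  p ≠ q ∧ (p.1 = q.1 ∨ ({p.1, q.1} : Finset V) ⊆ p.2 ∨ ({p.1, q.1} : Finset V) ⊆ q.2)

/-- A proper incidence k-coloring: adjacent incidences get distinct colors from {0, ..., k-1}. -/
def HasIncidenceColoring (H : Hypergraph' V) (k : ℕ) : Prop :=
  ∃ φ : V × Finset V → ℕ,
    (∀ p, H.IsIncidence p → φ p < k) ∧
    (∀ p q, H.IsIncidence p → H.IsIncidence q → IncAdj p q → φ p ≠ φ q)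

/-- χ_I(H): the incidence chromatic number. -/
noncomputable def incChromaticNumber (H : Hypergraph' V) : ℕ :=
  sInf {k | H.HasIncidenceColoring k}

/-- H is t-quasi-linear: two distinct edges meet in at most t vertices, and two
distinct vertices lie in at most t common edges. -/
def QuasiLinear (H : Hypergraph' V) (t : ℕ) : Prop :=
  (∀ s ∈ H.edges, ∀ s' ∈ H.edges, s ≠ s' → (s ∩ s').card ≤ t) ∧
  (∀ x ∈ H.verts, ∀ y ∈ H.verts, x ≠ y →
    (H.edges.filter fun s => x ∈ s ∧ y ∈ s).card ≤ t)

/-- H is linear: two distinct edges meet in at most one vertex. -/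
def Linear (H : Hypergraph' V) : Prop :=
  ∀ s ∈ H.edges, ∀ s' ∈ H.edges, s ≠ s' → (s ∩ s').card ≤ 1

/-- The Levi graph B(H): bipartite incidence graph between vertices and edges of H. -/
def Levi (H : Hypergraph' V) : SimpleGraph (V ⊕ Finset V) where
  Adj a b :=
    match a, b with
    | Sum.inl x, Sum.inr s => s ∈ H.edges ∧ x ∈ s
    | Sum.inr s, Sum.inl x => s ∈ H.edges ∧ x ∈ s
    | _, _ => False
  symm := by
    constructor
    rintro (x | s) (y | t) h <;> exact h
  loopless := by
    constructor
    rintro (x | s) h <;> exact h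

end Hypergraph'

open Finset

namespace QLAux

variable {V : Type*} [DecidableEq V]

instance (priority := 2000) bigDec (r p : ℕ) :
    DecidableEq ((V ⊕ (Finset V × ℕ)) × Fin r × ZMod p) :=
  @instDecidableEqProd _ _ inferInstance (@instDecidableEqProd _ _ inferInstance inferInstance)

/-- Pad labels for edge `s` to reach size `r`. -/
def pads (r : ℕ) (s : Finset V) : Finset (Finset V × ℕ) :=
  (Finset.range (r - s.card)).image fun j => (s, j)

/-- The padded edge. -/
def pe (r : ℕ) (s : Finset V) : Finset (V ⊕ (Finset V × ℕ)) :=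
  s.image Sum.inl ∪ (pads r s).image Sum.inr

lemma mem_pads {r : ℕ} {s s' : Finset V} {j : ℕ} :
    (s', j) ∈ pads r s ↔ s' = s ∧ j < r - s.card := by
  simp only [pads, mem_image, mem_range, Prod.mk.injEq]
  constructor
  · rintro ⟨a, ha, rfl, rfl⟩; exact ⟨rfl, ha⟩
  · rintro ⟨rfl, hj⟩; exact ⟨j, hj, rfl, rfl⟩

lemma mem_pe_inl {r : ℕ} {s : Finset V} {v : V} : Sum.inl v ∈ pe r s ↔ v ∈ s := by
  simp [pe]

lemma mem_pe_inr {r : ℕ} {s s' : Finset V} {j : ℕ} :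
    Sum.inr (s', j) ∈ pe r s ↔ s' = s ∧ j < r - s.card := by
  simp only [pe, mem_union, mem_image]
  constructor
  · rintro (⟨v, -, h⟩ | ⟨⟨u, k⟩, hu, h⟩)
    · exact absurd h (by simp)
    · obtain ⟨rfl, rfl⟩ : u = s' ∧ k = j := by
        simpa [Prod.ext_iff] using h
      exact mem_pads.1 hu
  · rintro h; exact Or.inr ⟨(s', j), mem_pads.2 h, rfl⟩

lemma card_pe {r : ℕ} {s : Finset V} (hs : s.card ≤ r) : (pe r s).card = r := by
  have hd : Disjoint (s.image Sum.inl) ((pads r s).image Sum.inr) := by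
    rw [disjoint_left]
    rintro x hx hx'
    obtain ⟨v, -, rfl⟩ := mem_image.1 hx
    obtain ⟨q, -, h⟩ := mem_image.1 hx'
    exact absurd h (by simp)
  rw [pe, card_union_of_disjoint hd, card_image_of_injective _ Sum.inl_injective,
    card_image_of_injective _ Sum.inr_injective, pads,
    card_image_of_injective _ (fun a b h => by simpa using h), card_range]
  omega

lemma pe_nonempty {r : ℕ} {s : Finset V} (hs : s.Nonempty) :
    (pe r s).Nonempty := by
  obtain ⟨v, hv⟩ := hs
  exact ⟨Sum.inl v, mem_pe_inl.2 hv⟩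

lemma pe_inj {r : ℕ} {s s' : Finset V} (h : pe r s = pe r s') : s = s' := by
  ext v
  constructor
  · intro hv
    exact mem_pe_inl.1 (h ▸ mem_pe_inl.2 hv)
  · intro hv
    exact mem_pe_inl.1 (h.symm ▸ mem_pe_inl.2 hv)

lemma pe_inter {r : ℕ} {s s' : Finset V} (h : s ≠ s') :
    pe r s ∩ pe r s' = (s ∩ s').image Sum.inl := by
  ext x
  rcases x with v | ⟨u, j⟩
  · simp [mem_pe_inl]
  · simp only [mem_inter, mem_pe_inr, mem_image]
    constructor
    · rintro ⟨⟨rfl, -⟩, rfl, -⟩; exact absurd rfl h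
    · rintro ⟨v, -, h⟩; exact absurd h (by simp)

/-- Truncated affine lines. -/
def line (r p : ℕ) (a b : ZMod p) : Finset (Fin r × ZMod p) :=
  Finset.univ.image fun i : Fin r => (i, a + b * ((i : ℕ) : ZMod p))

lemma mem_line {r p : ℕ} {a b y : ZMod p} {i : Fin r} :
    (i, y) ∈ line r p a b ↔ y = a + b * ((i : ℕ) : ZMod p) := by
  constructor
  · intro h
    simp only [line, mem_image, mem_univ, true_and] at h
    obtain ⟨i', h⟩ := h
    obtain ⟨rfl, rfl⟩ : i' = i ∧ a + b * ((i' : ℕ) : ZMod p) = y := by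
      constructor
      · exact congrArg Prod.fst h
      · exact congrArg Prod.snd h
    rfl
  · rintro rfl
    simp only [line, mem_image, mem_univ, true_and]
    exact ⟨i, rfl⟩

lemma card_line {r p : ℕ} {a b : ZMod p} : (line r p a b).card = r := by
  rw [line, card_image_of_injective _ (fun i i' h => congrArg Prod.fst h), card_univ,
    Fintype.card_fin]

lemma castFin_inj {r p : ℕ} (hrp : r ≤ p) {i i' : Fin r}
    (h : ((i : ℕ) : ZMod p) = ((i' : ℕ) : ZMod p)) : i = i' := by
  have h1 : ((i : ℕ) : ZMod p).val = (i : ℕ) := ZMod.val_cast_of_lt (lt_of_lt_of_le i.2 hrp)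
  have h2 : ((i' : ℕ) : ZMod p).val = (i' : ℕ) := ZMod.val_cast_of_lt (lt_of_lt_of_le i'.2 hrp)
  apply Fin.ext
  rw [← h1, ← h2, h]

lemma line_inter {r p : ℕ} (hp : p.Prime) (hrp : r ≤ p) {a b a' b' : ZMod p}
    (hab : (a, b) ≠ (a', b')) : (line r p a b ∩ line r p a' b').card ≤ 1 := by
  haveI := Fact.mk hp
  rw [card_le_one]
  rintro ⟨i, y⟩ hx ⟨i', y'⟩ hy
  simp only [mem_inter, mem_line] at hx hy
  by_cases hii : i = i'
  · subst hii; rw [hx.1, hy.1]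
  · exfalso
    have hc : ((i : ℕ) : ZMod p) ≠ ((i' : ℕ) : ZMod p) := fun h => hii (castFin_inj hrp h)
    have h1 : (b - b') * (((i : ℕ) : ZMod p) - ((i' : ℕ) : ZMod p)) = 0 := by
      have e1 := hx.1.symm.trans hx.2
      have e2 := hy.1.symm.trans hy.2
      ring_nf
      ring_nf at e1 e2
      linear_combination e1 - e2
    rcases mul_eq_zero.1 h1 with h | h
    · have hb : b = b' := by linear_combination h
      subst hb
      have ha : a = a' := by
        have := hx.1.symm.trans hx.2
        linear_combination this
      exact hab (by rw [ha])
    · exact hc (by linear_combination h)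

end QLAux
set_option linter.unusedSectionVars false

namespace QLAux

open Finset

variable {A B : Type*} [DecidableEq A] [DecidableEq B]

def mapHG (H' : Hypergraph' A) (g : A → B) : Hypergraph' B where
  verts := H'.verts.image g
  edges := H'.edges.image (Finset.image g)
  edge_sub := by
    intro e he
    obtain ⟨s, hs, rfl⟩ := Finset.mem_image.1 he
    exact Finset.image_subset_image (H'.edge_sub s hs)
  edge_nonempty := by
    intro e he
    obtain ⟨s, hs, rfl⟩ := Finset.mem_image.1 he
    exact (H'.edge_nonempty s hs).image g

variable {H' : Hypergraph' A} {g : A → B}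

lemma map_edge_inj (hg : Set.InjOn g ↑H'.verts) :
    ∀ s ∈ H'.edges, ∀ s' ∈ H'.edges, s.image g = s'.image g → s = s' := by
  have key : ∀ u ∈ H'.edges, ∀ u' ∈ H'.edges, u.image g = u'.image g → u ⊆ u' := by
    intro u hu u' hu' h x hx
    have hgx : g x ∈ u'.image g := h ▸ Finset.mem_image_of_mem g hx
    obtain ⟨y, hy, hxy⟩ := Finset.mem_image.1 hgx
    rwa [← hg (H'.edge_sub u' hu' hy) (H'.edge_sub u hu hx) hxy]
  intro s hs s' hs' h
  exact subset_antisymm (key s hs s' hs' h) (key s' hs' s hs h.symm)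

lemma map_mem_image_iff (hg : Set.InjOn g ↑H'.verts) {s : Finset A} (hs : s ⊆ H'.verts)
    {x : A} (hx : x ∈ H'.verts) : g x ∈ s.image g ↔ x ∈ s := by
  constructor
  · intro h
    obtain ⟨y, hy, hxy⟩ := Finset.mem_image.1 h
    rwa [← hg (hs hy) hx hxy]
  · exact Finset.mem_image_of_mem g

lemma filter_edge_image (hg : Set.InjOn g ↑H'.verts) (P : Finset B → Prop) [DecidablePred P]
    (Q : Finset A → Prop) [DecidablePred Q] (hPQ : ∀ s ∈ H'.edges, (P (s.image g) ↔ Q s)) :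
    ((H'.edges.image (Finset.image g)).filter P).card = (H'.edges.filter Q).card := by
  rw [Finset.filter_image]
  have h2 : (H'.edges.filter fun s => P (s.image g)) = H'.edges.filter Q :=
    Finset.filter_congr hPQ
  rw [h2, Finset.card_image_of_injOn]
  intro s hs s' hs' h
  simp only [Finset.coe_filter, Set.mem_setOf_eq] at hs hs'
  exact map_edge_inj hg s hs.1 s' hs'.1 h

lemma map_degree (hg : Set.InjOn g ↑H'.verts) {x : A} (hx : x ∈ H'.verts) :
    (mapHG H' g).degree (g x) = H'.degree x := by
  refine filter_edge_image hg _ _ (fun s hs => ?_)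
  exact map_mem_image_iff hg (H'.edge_sub s hs) hx

lemma map_ql (hg : Set.InjOn g ↑H'.verts) {t : ℕ} (hql : H'.QuasiLinear t) :
    (mapHG H' g).QuasiLinear t := by
  constructor
  · intro e he e' he' hne
    obtain ⟨s, hs, rfl⟩ := Finset.mem_image.1 he
    obtain ⟨s', hs', rfl⟩ := Finset.mem_image.1 he'
    have hss' : s ≠ s' := fun h => hne (by rw [h])
    have hmem : ∀ a ∈ s ∪ s', a ∈ H'.verts := by
      intro a ha
      rcases Finset.mem_union.1 ha with h | h
      exacts [H'.edge_sub s hs h, H'.edge_sub s' hs' h]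
    have hmem' : ∀ a ∈ (↑s ∪ ↑s' : Set A), a ∈ H'.verts := by
      rintro a (ha | ha)
      exacts [hmem a (Finset.mem_union_left _ ha), hmem a (Finset.mem_union_right _ ha)]
    have hinj : Set.InjOn g (↑s ∪ ↑s' : Set A) := fun a ha b hb hab =>
      hg (hmem' a ha) (hmem' b hb) hab
    rw [← Finset.image_inter_of_injOn _ _ hinj,
      Finset.card_image_of_injOn (hg.mono (Finset.coe_subset.2
        ((Finset.inter_subset_left).trans (H'.edge_sub s hs))))]
    exact hql.1 s hs s' hs' hss'
  · intro x hx y hy hxy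
    obtain ⟨u, hu, rfl⟩ := Finset.mem_image.1 hx
    obtain ⟨v, hv, rfl⟩ := Finset.mem_image.1 hy
    have huv : u ≠ v := fun h => hxy (by rw [h])
    have := filter_edge_image hg (fun e => g u ∈ e ∧ g v ∈ e) (fun s => u ∈ s ∧ v ∈ s)
      (fun s hs => and_congr (map_mem_image_iff hg (H'.edge_sub s hs) hu)
        (map_mem_image_iff hg (H'.edge_sub s hs) hv))
    exact this.trans_le (hql.2 u hu v hv huv)

end QLAux
namespace QLAux

open Finset

variable {V : Type*} [DecidableEq V]

def VP (H : Hypergraph' V) (r : ℕ) : Finset (V ⊕ (Finset V × ℕ)) :=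
  H.verts.image Sum.inl ∪ (H.edges.biUnion (pads r)).image Sum.inr

def pdeg (H : Hypergraph' V) (r : ℕ) (w : V ⊕ (Finset V × ℕ)) : ℕ :=
  (H.edges.filter fun s => w ∈ pe r s).card

def oldE (r p : ℕ) (s : Finset V) (c : Fin r × ZMod p) :
    Finset ((V ⊕ (Finset V × ℕ)) × Fin r × ZMod p) :=
  (pe r s).image fun w => (w, c)

def newE (r p : ℕ) (w : V ⊕ (Finset V × ℕ)) (a b : ZMod p) :
    Finset ((V ⊕ (Finset V × ℕ)) × Fin r × ZMod p) :=
  (line r p a b).image fun z => (w, z)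

def newIdx (H : Hypergraph' V) (r p Δ : ℕ) [NeZero p] :
    Finset ((V ⊕ (Finset V × ℕ)) × ZMod p × Fin Δ) :=
  ((VP H r) ×ˢ (univ : Finset (ZMod p)) ×ˢ (univ : Finset (Fin Δ))).filter
    fun q => (q.2.2 : ℕ) < Δ - pdeg H r q.1

def bigEdges (H : Hypergraph' V) (r p Δ : ℕ) [NeZero p] :
    Finset (Finset ((V ⊕ (Finset V × ℕ)) × Fin r × ZMod p)) :=
  ((H.edges ×ˢ (univ : Finset (Fin r × ZMod p))).image fun q => oldE r p q.1 q.2) ∪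
  ((newIdx H r p Δ).image fun q => newE r p q.1 q.2.1 ((q.2.2 : ℕ) : ZMod p))

def bigVerts (H : Hypergraph' V) (r p : ℕ) [NeZero p] :
    Finset ((V ⊕ (Finset V × ℕ)) × Fin r × ZMod p) :=
  VP H r ×ˢ (univ : Finset (Fin r × ZMod p))

lemma mem_VP_inl {H : Hypergraph' V} {r : ℕ} {v : V} :
    Sum.inl v ∈ VP H r ↔ v ∈ H.verts := by
  simp [VP]

lemma mem_VP_inr {H : Hypergraph' V} {r : ℕ} {s : Finset V} {j : ℕ} :
    Sum.inr (s, j) ∈ VP H r ↔ s ∈ H.edges ∧ j < r - s.card := by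
  simp only [VP, mem_union, mem_image, mem_biUnion]
  constructor
  · rintro (⟨v, -, h⟩ | ⟨q, ⟨s', hs', hq⟩, h⟩)
    · exact absurd h (by simp)
    · obtain rfl : q = (s, j) := by simpa using h
      obtain ⟨rfl, hj⟩ := mem_pads.1 hq
      exact ⟨hs', hj⟩
  · rintro ⟨hs, hj⟩
    exact Or.inr ⟨(s, j), ⟨s, hs, mem_pads.2 ⟨rfl, hj⟩⟩, rfl⟩

lemma mem_oldE {r p : ℕ} {s : Finset V} {c : Fin r × ZMod p}
    {x : (V ⊕ (Finset V × ℕ)) × Fin r × ZMod p} :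
    x ∈ oldE r p s c ↔ x.1 ∈ pe r s ∧ x.2 = c := by
  simp only [oldE, mem_image]
  constructor
  · rintro ⟨w, hw, rfl⟩; exact ⟨hw, rfl⟩
  · rintro ⟨h1, h2⟩; exact ⟨x.1, h1, by rw [← h2]⟩

lemma mem_newE {r p : ℕ} {w : V ⊕ (Finset V × ℕ)} {a b : ZMod p}
    {x : (V ⊕ (Finset V × ℕ)) × Fin r × ZMod p} :
    x ∈ newE r p w a b ↔ x.1 = w ∧ x.2 ∈ line r p a b := by
  simp only [newE, mem_image]
  constructor
  · rintro ⟨z, hz, rfl⟩; exact ⟨rfl, hz⟩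
  · rintro ⟨h1, h2⟩; exact ⟨x.2, h2, by rw [← h1]⟩

lemma pdeg_pos {H : Hypergraph' V} {r : ℕ} {s : Finset V} {w : V ⊕ (Finset V × ℕ)}
    (hs : s ∈ H.edges) (hw : w ∈ pe r s) : 1 ≤ pdeg H r w :=
  Finset.card_pos.2 ⟨s, Finset.mem_filter.2 ⟨hs, hw⟩⟩

lemma oldE_inj {H : Hypergraph' V} {r p : ℕ} {s s' : Finset V} {c c' : Fin r × ZMod p}
    (hs : s ∈ H.edges) (hs' : s' ∈ H.edges)
    (h : oldE r p s c = oldE r p s' c') : s = s' ∧ c = c' := by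
  obtain ⟨u, hu⟩ := pe_nonempty (H.edge_nonempty s hs)
  have h1 : (u, c) ∈ oldE r p s' c' := h ▸ mem_oldE.2 ⟨hu, rfl⟩
  have hc : c = c' := (mem_oldE.1 h1).2
  subst hc
  refine ⟨pe_inj (r := r) (subset_antisymm ?_ ?_), rfl⟩
  · intro x hx
    exact (mem_oldE.1 (h ▸ mem_oldE.2 ⟨hx, rfl⟩ : (x, c) ∈ oldE r p s' c)).1
  · intro x hx
    exact (mem_oldE.1 (h.symm ▸ mem_oldE.2 ⟨hx, rfl⟩ : (x, c) ∈ oldE r p s c)).1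

lemma oldE_ne_newE {H : Hypergraph' V} {r p Δ : ℕ} {s : Finset V} {c : Fin r × ZMod p}
    {w : V ⊕ (Finset V × ℕ)} {a β : ZMod p}
    (hcard : ∀ s ∈ H.edges, s.card ≤ r) (hΔ1 : r = 1 → Δ ≤ 1)
    (hs : s ∈ H.edges) (hw : pdeg H r w < Δ) : oldE r p s c ≠ newE r p w a β := by
  intro heq
  have hall : ∀ u ∈ pe r s, u = w := by
    intro u hu
    exact (mem_newE.1 (heq ▸ mem_oldE.2 ⟨hu, rfl⟩ : (u, c) ∈ newE r p w a β)).1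
  obtain ⟨u, hu⟩ := pe_nonempty (H.edge_nonempty s hs)
  have hwpe : w ∈ pe r s := hall u hu ▸ hu
  have hpe1 : pe r s = {w} :=
    Finset.eq_singleton_iff_unique_mem.2 ⟨hwpe, hall⟩
  have hr1 : r = 1 := by
    have := card_pe (hcard s hs)
    rw [hpe1] at this
    simpa using this.symm
  have := pdeg_pos hs hwpe
  have := hΔ1 hr1
  omega

lemma one_le_rank {H : Hypergraph' V} (hne : H.edges.Nonempty) : 1 ≤ H.rank := by
  obtain ⟨s, hs⟩ := hne
  exact le_trans (Finset.card_pos.2 (H.edge_nonempty s hs)) (Finset.le_sup hs)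

lemma one_le_maxDegree {H : Hypergraph' V} (hne : H.edges.Nonempty) : 1 ≤ H.maxDegree := by
  obtain ⟨s, hs⟩ := hne
  obtain ⟨x, hx⟩ := H.edge_nonempty s hs
  refine le_trans ?_ (Finset.le_sup (H.edge_sub s hs hx))
  exact Finset.card_pos.2 ⟨s, Finset.mem_filter.2 ⟨hs, hx⟩⟩

lemma maxDegree_le_one {H : Hypergraph' V} (h : H.rank ≤ 1) : H.maxDegree ≤ 1 := by
  refine Finset.sup_le fun x _ => ?_
  rw [Hypergraph'.degree, Finset.card_le_one]
  intro s hs s' hs'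
  rw [Finset.mem_filter] at hs hs'
  have h1 : s.card ≤ 1 := le_trans (Finset.le_sup hs.1) h
  have h2 : s'.card ≤ 1 := le_trans (Finset.le_sup hs'.1) h
  rw [Finset.eq_singleton_iff_unique_mem.2 ⟨hs.2, fun y hy => Finset.card_le_one.1 h1 y hy x hs.2⟩,
    Finset.eq_singleton_iff_unique_mem.2 ⟨hs'.2, fun y hy => Finset.card_le_one.1 h2 y hy x hs'.2⟩]

lemma newE_inj {H : Hypergraph' V} {r p Δ : ℕ} (hp : p.Prime) (hrp : r ≤ p) (hΔp : Δ ≤ p)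
    (hr1 : 1 ≤ r) (hΔ1 : r = 1 → Δ ≤ 1)
    {w w' : V ⊕ (Finset V × ℕ)} {a a' : ZMod p} {b b' : Fin Δ}
    (hb : (b : ℕ) < Δ - pdeg H r w) (hb' : (b' : ℕ) < Δ - pdeg H r w')
    (h : newE r p w a ((b : ℕ) : ZMod p) = newE r p w' a' ((b' : ℕ) : ZMod p)) :
    w = w' ∧ a = a' ∧ b = b' := by
  haveI := Fact.mk hp
  have hmem0 : ((w, ((⟨0, hr1⟩ : Fin r), a)) : (V ⊕ (Finset V × ℕ)) × Fin r × ZMod p)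
      ∈ newE r p w a ((b : ℕ) : ZMod p) := by
    refine mem_newE.2 ⟨rfl, mem_line.2 ?_⟩
    simp
  rw [h] at hmem0
  obtain ⟨hww, hline⟩ := mem_newE.1 hmem0
  have ha : a = a' := by simpa using mem_line.1 hline
  refine ⟨hww, ha, ?_⟩
  rcases eq_or_lt_of_le hr1 with hr | hr2
  · have hΔle := hΔ1 hr.symm
    have hb0 : (b : ℕ) = 0 := by omega
    have hb'0 : (b' : ℕ) = 0 := by omega
    exact Fin.ext (by omega)
  · have hmem1 : ((w, ((⟨1, hr2⟩ : Fin r), a + ((b : ℕ) : ZMod p) * ((1 : ℕ) : ZMod p))) :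
        (V ⊕ (Finset V × ℕ)) × Fin r × ZMod p) ∈ newE r p w a ((b : ℕ) : ZMod p) :=
      mem_newE.2 ⟨rfl, mem_line.2 rfl⟩
    rw [h] at hmem1
    obtain ⟨-, hline1⟩ := mem_newE.1 hmem1
    have heq1 : a + ((b : ℕ) : ZMod p) * ((1 : ℕ) : ZMod p)
        = a' + ((b' : ℕ) : ZMod p) * ((1 : ℕ) : ZMod p) := mem_line.1 hline1
    rw [← ha] at heq1
    have hc1 : ((1 : ℕ) : ZMod p) ≠ 0 := by
      intro hc
      have h1p := ZMod.val_cast_of_lt hp.one_lt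
      rw [hc, ZMod.val_zero] at h1p
      omega
    have hbv : ((b : ℕ) : ZMod p) = ((b' : ℕ) : ZMod p) :=
      mul_right_cancel₀ hc1 (by linear_combination heq1)
    have h1 : ((b : ℕ) : ZMod p).val = (b : ℕ) := ZMod.val_cast_of_lt (lt_of_lt_of_le b.2 hΔp)
    have h2 : ((b' : ℕ) : ZMod p).val = (b' : ℕ) := ZMod.val_cast_of_lt (lt_of_lt_of_le b'.2 hΔp)
    apply Fin.ext
    rw [← h1, ← h2, hbv]

end QLAux
namespace QLAux

open Finset

variable {V : Type*} [DecidableEq V]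

lemma mem_line' {r p : ℕ} {a b : ZMod p} {x : Fin r × ZMod p} :
    x ∈ line r p a b ↔ x.2 = a + b * ((x.1 : ℕ) : ZMod p) := by
  obtain ⟨i, y⟩ := x
  exact mem_line

lemma card_fin_filter_lt {Δ d : ℕ} (hd : d ≤ Δ) :
    ((univ : Finset (Fin Δ)).filter fun b : Fin Δ => (b : ℕ) < d).card = d := by
  have him : ((univ : Finset (Fin Δ)).filter fun b : Fin Δ => (b : ℕ) < d).image Fin.val
      = Finset.range d := by
    ext k
    simp only [mem_image, mem_filter, mem_univ, true_and, mem_range]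
    exact ⟨fun ⟨b, hb, he⟩ => he ▸ hb, fun hk => ⟨⟨k, lt_of_lt_of_le hk hd⟩, hk, rfl⟩⟩
  calc ((univ : Finset (Fin Δ)).filter fun b : Fin Δ => (b : ℕ) < d).card
      = (((univ : Finset (Fin Δ)).filter fun b : Fin Δ => (b : ℕ) < d).image Fin.val).card :=
        (Finset.card_image_of_injective _ Fin.val_injective).symm
    _ = (Finset.range d).card := by rw [him]
    _ = d := Finset.card_range d

lemma pdeg_le {H : Hypergraph' V} {r : ℕ} {w : V ⊕ (Finset V × ℕ)}
    (hw : w ∈ VP H r) (hΔ : 1 ≤ H.maxDegree) : pdeg H r w ≤ H.maxDegree := by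
  rcases w with v | ⟨s₀, j⟩
  · have hv : v ∈ H.verts := mem_VP_inl.1 hw
    have heq : pdeg H r (Sum.inl v) = H.degree v := by
      unfold pdeg Hypergraph'.degree
      congr 1
      apply Finset.filter_congr
      intro s _
      exact mem_pe_inl
    rw [heq]
    exact Finset.le_sup hv
  · obtain ⟨hs₀, hj⟩ := mem_VP_inr.1 hw
    have heq : (H.edges.filter fun s => Sum.inr (s₀, j) ∈ pe r s) = {s₀} := by
      ext s
      simp only [mem_filter, mem_singleton, mem_pe_inr]
      constructor
      · rintro ⟨-, rfl, -⟩; rfl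
      · rintro rfl; exact ⟨hs₀, rfl, hj⟩
    unfold pdeg
    rw [heq]
    simpa using hΔ

lemma pe_sub_VP {H : Hypergraph' V} {r : ℕ} {s : Finset V} (hs : s ∈ H.edges) :
    pe r s ⊆ VP H r := by
  intro u hu
  rcases u with v | ⟨s', j⟩
  · exact mem_VP_inl.2 (H.edge_sub s hs (mem_pe_inl.1 hu))
  · obtain ⟨rfl, hj⟩ := mem_pe_inr.1 hu
    exact mem_VP_inr.2 ⟨hs, hj⟩

lemma big_edge_sub {H : Hypergraph' V} {r p Δ : ℕ} [NeZero p] :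
    ∀ e ∈ bigEdges H r p Δ, e ⊆ bigVerts H r p := by
  intro e he x hx
  rcases mem_union.1 he with h | h
  · obtain ⟨⟨s, c⟩, hq, rfl⟩ := mem_image.1 h
    have hs : s ∈ H.edges := (mem_product.1 hq).1
    obtain ⟨h1, -⟩ := mem_oldE.1 hx
    exact mem_product.2 ⟨pe_sub_VP hs h1, mem_univ _⟩
  · obtain ⟨⟨w, a, b⟩, hq, rfl⟩ := mem_image.1 h
    have hw : w ∈ VP H r := (mem_product.1 (mem_filter.1 hq).1).1
    obtain ⟨h1, -⟩ := mem_newE.1 hx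
    exact mem_product.2 ⟨h1 ▸ hw, mem_univ _⟩

lemma big_edge_nonempty {H : Hypergraph' V} {r p Δ : ℕ} [NeZero p] (hr1 : 1 ≤ r) :
    ∀ e ∈ bigEdges H r p Δ, e.Nonempty := by
  intro e he
  rcases mem_union.1 he with h | h
  · obtain ⟨⟨s, c⟩, hq, rfl⟩ := mem_image.1 h
    exact (pe_nonempty (H.edge_nonempty s (mem_product.1 hq).1)).image _
  · obtain ⟨⟨w, a, b⟩, hq, rfl⟩ := mem_image.1 h
    refine Finset.Nonempty.image ?_ _
    rw [← Finset.card_pos, card_line]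
    exact hr1

lemma big_uniform {H : Hypergraph' V} {r p Δ : ℕ} [NeZero p]
    (hcard : ∀ s ∈ H.edges, s.card ≤ r) :
    ∀ e ∈ bigEdges H r p Δ, e.card = r := by
  intro e he
  rcases mem_union.1 he with h | h
  · obtain ⟨⟨s, c⟩, hq, rfl⟩ := mem_image.1 h
    rw [oldE, card_image_of_injective _ (fun x y hxy => congrArg Prod.fst hxy),
      card_pe (hcard s (mem_product.1 hq).1)]
  · obtain ⟨⟨w, a, b⟩, hq, rfl⟩ := mem_image.1 h
    rw [newE, card_image_of_injective _ (fun x y hxy => congrArg Prod.snd hxy), card_line]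

lemma big_degree {H : Hypergraph' V} {r p Δ : ℕ} [NeZero p] (hp : p.Prime)
    (hrp : r ≤ p) (hΔp : Δ ≤ p) (hr1 : 1 ≤ r)
    (hcard : ∀ s ∈ H.edges, s.card ≤ r) (hΔ1 : r = 1 → Δ ≤ 1)
    {w : V ⊕ (Finset V × ℕ)} {c : Fin r × ZMod p}
    (hw : w ∈ VP H r) (hpd : pdeg H r w ≤ Δ) :
    ((bigEdges H r p Δ).filter fun e => (w, c) ∈ e).card = Δ := by
  rw [bigEdges, filter_union, card_union_of_disjoint]
  · have hold : (((H.edges ×ˢ (univ : Finset (Fin r × ZMod p))).image fun q =>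
        oldE r p q.1 q.2).filter fun e => (w, c) ∈ e).card = pdeg H r w := by
      rw [Finset.filter_image]
      have hfil : ((H.edges ×ˢ (univ : Finset (Fin r × ZMod p))).filter
          fun q => (w, c) ∈ oldE r p q.1 q.2)
          = (H.edges.filter fun s => w ∈ pe r s).image fun s => (s, c) := by
        ext ⟨s, c'⟩
        simp only [mem_filter, mem_product, mem_univ, and_true, mem_image, mem_oldE]
        constructor
        · rintro ⟨hs, hpe, rfl⟩
          exact ⟨s, ⟨hs, hpe⟩, rfl⟩
        · rintro ⟨s₀, ⟨hs₀, hpe⟩, heq⟩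
          obtain ⟨rfl, rfl⟩ : s₀ = s ∧ c = c' := by
            simpa [Prod.ext_iff] using heq
          exact ⟨hs₀, hpe, rfl⟩
      rw [hfil, Finset.image_image]
      rw [Finset.card_image_of_injOn, pdeg]
      intro s hs s' hs' hee
      simp only [Finset.coe_filter, Set.mem_setOf_eq] at hs hs'
      exact (oldE_inj hs.1 hs'.1 hee).1
    have hnew : (((newIdx H r p Δ).image fun q =>
        newE r p q.1 q.2.1 ((q.2.2 : ℕ) : ZMod p)).filter fun e => (w, c) ∈ e).card
        = Δ - pdeg H r w := by
      rw [Finset.filter_image]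
      have hfil : ((newIdx H r p Δ).filter fun q => (w, c) ∈ newE r p q.1 q.2.1
          ((q.2.2 : ℕ) : ZMod p))
          = ((univ : Finset (Fin Δ)).filter fun b : Fin Δ => (b : ℕ) < Δ - pdeg H r w).image
            fun b : Fin Δ => (w, c.2 - ((b : ℕ) : ZMod p) * ((c.1 : ℕ) : ZMod p), b) := by
        ext ⟨w', a, b⟩
        simp only [newIdx, mem_filter, mem_product, mem_univ, and_true, true_and,
          mem_image, mem_newE, mem_line']
        constructor
        · rintro ⟨⟨hw', hb⟩, heq, hc⟩
          refine ⟨b, ?_, ?_⟩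
          · rw [heq]; exact hb
          · have ha : a = c.2 - ((b : ℕ) : ZMod p) * ((c.1 : ℕ) : ZMod p) := by
              rw [hc]; ring
            rw [← heq, ← ha]
        · rintro ⟨b₀, hb₀, heq⟩
          obtain ⟨rfl, rfl, rfl⟩ : w = w' ∧ c.2 - ((b₀ : ℕ) : ZMod p) * ((c.1 : ℕ) : ZMod p) = a
              ∧ b₀ = b := by
            simpa [Prod.ext_iff] using heq
          exact ⟨⟨hw, hb₀⟩, rfl, by ring⟩
      rw [hfil, Finset.image_image]
      rw [Finset.card_image_of_injOn, card_fin_filter_lt (Nat.sub_le _ _)]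
      intro b hb b' hb' hee
      simp only [Finset.coe_filter, Set.mem_setOf_eq, mem_univ, true_and] at hb hb'
      exact (newE_inj hp hrp hΔp hr1 hΔ1 hb hb' hee).2.2
    rw [hold, hnew]
    omega
  · refine Finset.disjoint_left.2 fun e he1 he2 => ?_
    obtain ⟨⟨s, c'⟩, hq, rfl⟩ := mem_image.1 (mem_filter.1 he1).1
    obtain ⟨⟨w', a, b⟩, hq', heq⟩ := mem_image.1 (mem_filter.1 he2).1
    have hs : s ∈ H.edges := (mem_product.1 hq).1
    have hb : (b : ℕ) < Δ - pdeg H r w' := by simpa using (mem_filter.1 hq').2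
    have heq' : newE r p w' a ((b : ℕ) : ZMod p) = oldE r p s c' := heq
    exact oldE_ne_newE hcard hΔ1 hs (by omega) heq'.symm

end QLAux
namespace QLAux

open Finset

variable {V : Type*} [DecidableEq V]

def extW : (V ⊕ (Finset V × ℕ)) → Finset V :=
  fun w => match w with
  | Sum.inl v => {v}
  | Sum.inr _ => ∅

def extF {r p : ℕ} (e : Finset ((V ⊕ (Finset V × ℕ)) × Fin r × ZMod p)) : Finset V :=
  e.biUnion fun z => extW z.1

lemma extF_oldE {r p : ℕ} {s : Finset V} {c : Fin r × ZMod p} :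
    extF (oldE r p s c) = s := by
  ext v
  simp only [extF, mem_biUnion]
  constructor
  · rintro ⟨⟨u, c₀⟩, hz, hv⟩
    obtain ⟨h1, -⟩ := mem_oldE.1 hz
    rcases u with u₀ | q
    · obtain rfl : v = u₀ := by simpa [extW] using hv
      exact mem_pe_inl.1 h1
    · exact absurd hv (by simp [extW])
  · intro hv
    exact ⟨(Sum.inl v, c), mem_oldE.2 ⟨mem_pe_inl.2 hv, rfl⟩, by simp [extW]⟩

lemma mem_bigEdges {H : Hypergraph' V} {r p Δ : ℕ} [NeZero p] {e} :
    e ∈ bigEdges H r p Δ ↔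
      (∃ s c, s ∈ H.edges ∧ e = oldE r p s c) ∨
      (∃ w, ∃ a, ∃ b : Fin Δ, w ∈ VP H r ∧ (b : ℕ) < Δ - pdeg H r w ∧
        e = newE r p w a ((b : ℕ) : ZMod p)) := by
  constructor
  · intro he
    rcases mem_union.1 he with h | h
    · obtain ⟨⟨s, c⟩, hq, heq⟩ := mem_image.1 h
      exact Or.inl ⟨s, c, (mem_product.1 hq).1, heq.symm⟩
    · obtain ⟨⟨w, a, b⟩, hq, heq⟩ := mem_image.1 h
      have hq' := mem_filter.1 hq
      refine Or.inr ⟨w, a, b, (mem_product.1 hq'.1).1, by simpa using hq'.2, ?_⟩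
      exact (heq : newE r p w a ((b : ℕ) : ZMod p) = e).symm
  · rintro (⟨s, c, hs, rfl⟩ | ⟨w, a, b, hw, hb, rfl⟩)
    · exact mem_union.2 (Or.inl (mem_image.2 ⟨(s, c), mem_product.2 ⟨hs, mem_univ _⟩, rfl⟩))
    · refine mem_union.2 (Or.inr (mem_image.2 ⟨(w, a, b), ?_, rfl⟩))
      exact mem_filter.2 ⟨mem_product.2 ⟨hw, mem_product.2 ⟨mem_univ _, mem_univ _⟩⟩, hb⟩

lemma big_ql1 {H : Hypergraph' V} {r p Δ t : ℕ} [NeZero p] (hp : p.Prime)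
    (hrp : r ≤ p) (hΔp : Δ ≤ p) (ht : 1 ≤ t) (hql : H.QuasiLinear t) :
    ∀ e ∈ bigEdges H r p Δ, ∀ e' ∈ bigEdges H r p Δ, e ≠ e' → (e ∩ e').card ≤ t := by
  have hmix : ∀ (s : Finset V) (c : Fin r × ZMod p) (w : V ⊕ (Finset V × ℕ)) (a β : ZMod p),
      ((oldE r p s c ∩ newE r p w a β).card ≤ t) := by
    intro s c w a β
    refine le_trans (Finset.card_le_one.2 fun x hx y hy => ?_) ht
    obtain ⟨hx1, hx2⟩ := mem_inter.1 hx
    obtain ⟨hy1, hy2⟩ := mem_inter.1 hy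
    have ex1 : x.2 = c := (mem_oldE.1 hx1).2
    have ex2 : x.1 = w := (mem_newE.1 hx2).1
    have ey1 : y.2 = c := (mem_oldE.1 hy1).2
    have ey2 : y.1 = w := (mem_newE.1 hy2).1
    exact Prod.ext (ex2.trans ey2.symm) (ex1.trans ey1.symm)
  intro e he e' he' hne
  rcases mem_bigEdges.1 he with ⟨s, c, hs, rfl⟩ | ⟨w, a, b, hw, hb, rfl⟩ <;>
    rcases mem_bigEdges.1 he' with ⟨s', c', hs', rfl⟩ | ⟨w', a', b', hw', hb', rfl⟩
  · by_cases hcc : c = c'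
    · subst hcc
      have hss : s ≠ s' := by rintro rfl; exact hne rfl
      have hint : oldE r p s c ∩ oldE r p s' c
          = ((s ∩ s').image Sum.inl).image fun w => (w, c) := by
        rw [oldE, oldE, ← Finset.image_inter _ _ (fun x y hxy => congrArg Prod.fst hxy),
          pe_inter hss]
      rw [hint, Finset.card_image_of_injective _ (fun x y hxy => congrArg Prod.fst hxy),
        Finset.card_image_of_injective _ Sum.inl_injective]
      exact hql.1 s hs s' hs' hss
    · have hint : oldE r p s c ∩ oldE r p s' c' = ∅ := by
        refine Finset.eq_empty_of_forall_notMem fun x hx => ?_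
        obtain ⟨h1, h2⟩ := mem_inter.1 hx
        exact hcc (((mem_oldE.1 h1).2).symm.trans (mem_oldE.1 h2).2)
      rw [hint]
      simpa using Nat.zero_le t
  · exact hmix _ _ _ _ _
  · rw [Finset.inter_comm]
    exact hmix _ _ _ _ _
  · by_cases hww : w = w'
    · subst hww
      have hab : (a, ((b : ℕ) : ZMod p)) ≠ (a', ((b' : ℕ) : ZMod p)) := by
        intro hcon
        have h1 : a = a' := congrArg Prod.fst hcon
        have h2 : ((b : ℕ) : ZMod p) = ((b' : ℕ) : ZMod p) := congrArg Prod.snd hcon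
        exact hne (by rw [h1, h2])
      have hint : newE r p w a ((b : ℕ) : ZMod p) ∩ newE r p w a' ((b' : ℕ) : ZMod p)
          = (line r p a ((b : ℕ) : ZMod p) ∩ line r p a' ((b' : ℕ) : ZMod p)).image
            fun z => (w, z) := by
        rw [newE, newE, ← Finset.image_inter _ _ (fun x y hxy => congrArg Prod.snd hxy)]
      rw [hint, Finset.card_image_of_injective _ (fun x y hxy => congrArg Prod.snd hxy)]
      exact le_trans (line_inter hp hrp hab) ht
    · have hint : newE r p w a ((b : ℕ) : ZMod p) ∩ newE r p w' a' ((b' : ℕ) : ZMod p) = ∅ := by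
        refine Finset.eq_empty_of_forall_notMem fun x hx => ?_
        obtain ⟨h1, h2⟩ := mem_inter.1 hx
        exact hww (((mem_newE.1 h1).1).symm.trans (mem_newE.1 h2).1)
      rw [hint]
      simpa using Nat.zero_le t

lemma big_ql2 {H : Hypergraph' V} {r p Δ t : ℕ} [NeZero p] (hp : p.Prime)
    (hrp : r ≤ p) (ht : 1 ≤ t) (hql : H.QuasiLinear t) :
    ∀ x ∈ bigVerts H r p, ∀ y ∈ bigVerts H r p, x ≠ y →
      ((bigEdges H r p Δ).filter fun e => x ∈ e ∧ y ∈ e).card ≤ t := by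
  rintro ⟨w, c⟩ hx ⟨w', c'⟩ hy hxy
  have hwVP : w ∈ VP H r := (mem_product.1 hx).1
  have hw'VP : w' ∈ VP H r := (mem_product.1 hy).1
  by_cases hww : w = w'
  · subst hww
    have hcc : c ≠ c' := by
      intro h; exact hxy (by rw [h])
    refine le_trans (Finset.card_le_one.2 ?_) ht
    have key : ∀ e₀ ∈ bigEdges H r p Δ, (w, c) ∈ e₀ → (w, c') ∈ e₀ →
        ∃ a β, e₀ = newE r p w a β ∧ c ∈ line r p a β ∧ c' ∈ line r p a β := by
      intro e₀ h₀ h1 h2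
      rcases mem_bigEdges.1 h₀ with ⟨s, c₀, hs, rfl⟩ | ⟨w₀, a, b, hw₀, hb, rfl⟩
      · exact absurd (((mem_oldE.1 h1).2).trans ((mem_oldE.1 h2).2).symm) hcc
      · have hww0 : w = w₀ := (mem_newE.1 h1).1
        refine ⟨a, ((b : ℕ) : ZMod p), ?_, ?_, ?_⟩
        · rw [hww0]
        · exact (mem_newE.1 h1).2
        · exact (mem_newE.1 h2).2
    intro e he e2 he2
    rw [mem_filter] at he he2
    obtain ⟨a, β, rfl, hc1, hc1'⟩ := key e he.1 he.2.1 he.2.2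
    obtain ⟨a2, β2, rfl, hc2, hc2'⟩ := key e2 he2.1 he2.2.1 he2.2.2
    by_cases hab : (a, β) = (a2, β2)
    · have h1 : a = a2 := congrArg Prod.fst hab
      have h2 : β = β2 := congrArg Prod.snd hab
      rw [h1, h2]
    · exfalso
      have hle := line_inter (r := r) hp hrp hab
      have h2 : 2 ≤ (line r p a β ∩ line r p a2 β2).card :=
        Finset.one_lt_card.2 ⟨c, mem_inter.2 ⟨hc1, hc2⟩, c', mem_inter.2 ⟨hc1', hc2'⟩, hcc⟩
      omega
  · -- w ≠ w'
    have key : ∀ e₀ ∈ bigEdges H r p Δ, (w, c) ∈ e₀ → (w', c') ∈ e₀ →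
        c = c' ∧ ∃ s, s ∈ H.edges ∧ e₀ = oldE r p s c ∧ w ∈ pe r s ∧ w' ∈ pe r s := by
      intro e₀ h₀ h1 h2
      rcases mem_bigEdges.1 h₀ with ⟨s, c₀, hs, rfl⟩ | ⟨w₀, a, b, hw₀, hb, rfl⟩
      · have e1 := mem_oldE.1 h1
        have e2 := mem_oldE.1 h2
        have hc0 : c = c₀ := e1.2
        have hc0' : c' = c₀ := e2.2
        exact ⟨hc0.trans hc0'.symm, s, hs, by rw [hc0], e1.1, e2.1⟩
      · exact absurd (((mem_newE.1 h1).1).trans ((mem_newE.1 h2).1).symm) hww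
    rcases w with v | ⟨s₀, j⟩ <;> rcases w' with v' | ⟨s₀', j'⟩
    · -- both original vertices
      have hvv : v ≠ v' := fun h => hww (by rw [h])
      have hv : v ∈ H.verts := mem_VP_inl.1 hwVP
      have hv' : v' ∈ H.verts := mem_VP_inl.1 hw'VP
      refine le_trans (Finset.card_le_card_of_injOn extF ?_ ?_)
        (hql.2 v hv v' hv' hvv)
      · intro e he
        rw [Finset.mem_coe, mem_filter] at he
        obtain ⟨-, s, hs, rfl, hw1, hw2⟩ := key e he.1 he.2.1 he.2.2
        rw [extF_oldE]
        exact mem_filter.2 ⟨hs, mem_pe_inl.1 hw1, mem_pe_inl.1 hw2⟩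
      · intro e he e2 he2 hee
        simp only [Finset.coe_filter, Set.mem_setOf_eq] at he he2
        obtain ⟨-, s, hs, rfl, -, -⟩ := key e he.1 he.2.1 he.2.2
        obtain ⟨-, s2, hs2, rfl, -, -⟩ := key e2 he2.1 he2.2.1 he2.2.2
        rw [extF_oldE, extF_oldE] at hee
        rw [hee]
    -- remaining three cases: at least one pad vertex, count ≤ 1
    all_goals {
      refine le_trans (Finset.card_le_one.2 ?_) ht
      intro e he e2 he2
      rw [mem_filter] at he he2
      obtain ⟨-, s, hs, rfl, hw1, hw2⟩ := key e he.1 he.2.1 he.2.2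
      obtain ⟨-, s2, hs2, heq2, hw1', hw2'⟩ := key e2 he2.1 he2.2.1 he2.2.2
      rw [heq2]
      congr 1
      first
      | exact ((mem_pe_inr.1 hw2).1.symm.trans (mem_pe_inr.1 hw2').1)
      | exact ((mem_pe_inr.1 hw1).1.symm.trans (mem_pe_inr.1 hw1').1)
    }

end QLAux
namespace QLAux

open Finset

variable {V : Type*} [DecidableEq V]

def gmap (r p : ℕ) (c₀ : Fin r × ZMod p)
    (enc : ((V ⊕ (Finset V × ℕ)) × Fin r × ZMod p) → ℕ)
    (x : (V ⊕ (Finset V × ℕ)) × Fin r × ZMod p) : V ⊕ ℕ :=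
  match x with
  | (Sum.inl v, c) => if c = c₀ then Sum.inl v else Sum.inr (enc (Sum.inl v, c))
  | (Sum.inr q, c) => Sum.inr (enc (Sum.inr q, c))

lemma gmap_inl_c₀ {r p : ℕ} {c₀ : Fin r × ZMod p} {enc} {v : V} :
    gmap r p c₀ enc (Sum.inl v, c₀) = Sum.inl v := by
  simp [gmap]

lemma gmap_eq_inl_iff {r p : ℕ} {c₀ : Fin r × ZMod p} {enc} {u : V}
    {x : (V ⊕ (Finset V × ℕ)) × Fin r × ZMod p} :
    gmap r p c₀ enc x = Sum.inl u ↔ x = (Sum.inl u, c₀) := by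
  constructor
  · intro h
    rcases x with ⟨v | q, c⟩
    · by_cases hc : c = c₀
      · subst hc
        obtain rfl : v = u := by simpa [gmap] using h
        rfl
      · exact absurd h (by simp [gmap, hc])
    · exact absurd h (by simp [gmap])
  · rintro rfl
    exact gmap_inl_c₀

lemma gmap_injOn {r p : ℕ} {c₀ : Fin r × ZMod p} {enc}
    {S : Finset ((V ⊕ (Finset V × ℕ)) × Fin r × ZMod p)}
    (henc : Set.InjOn enc (S : Set ((V ⊕ (Finset V × ℕ)) × Fin r × ZMod p))) :
    Set.InjOn (gmap r p c₀ enc) (S : Set ((V ⊕ (Finset V × ℕ)) × Fin r × ZMod p)) := by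
  have hner : ∀ x : (V ⊕ (Finset V × ℕ)) × Fin r × ZMod p, (∀ v : V, x ≠ (Sum.inl v, c₀)) →
      gmap r p c₀ enc x = Sum.inr (enc x) := by
    rintro ⟨v | q, c⟩ h
    · by_cases hc : c = c₀
      · exact absurd (by rw [hc]) (h v)
      · simp [gmap, hc]
    · simp [gmap]
  intro x hx y hy hxy
  by_cases hxl : ∃ v : V, x = (Sum.inl v, c₀)
  · obtain ⟨v, rfl⟩ := hxl
    rw [gmap_inl_c₀] at hxy
    exact (gmap_eq_inl_iff.1 hxy.symm).symm
  · push_neg at hxl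
    rw [hner x hxl] at hxy
    by_cases hyl : ∃ v : V, y = (Sum.inl v, c₀)
    · obtain ⟨v, rfl⟩ := hyl
      rw [gmap_inl_c₀] at hxy
      exact absurd hxy (by simp)
    · push_neg at hyl
      rw [hner y hyl] at hxy
      exact henc hx hy (Sum.inr.inj hxy)


end QLAux
namespace QLAux

open Finset

lemma map_card {A B : Type*} [DecidableEq A] [DecidableEq B] {H' : Hypergraph' A} {g : A → B}
    (hg : Set.InjOn g ↑H'.verts) {s : Finset A} (hs : s ∈ H'.edges) :
    (s.image g).card = s.card :=
  Finset.card_image_of_injOn (hg.mono (Finset.coe_subset.2 (H'.edge_sub s hs)))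

end QLAux

theorem statement_3 {V : Type*} [DecidableEq V] (t : ℕ) (H : Hypergraph' V)
    (hql : H.QuasiLinear t) (hne : H.edges.Nonempty) :
    ∃ (Hstar : Hypergraph' (V ⊕ ℕ)) (f : Finset V → Finset (V ⊕ ℕ)),
      (∀ s ∈ Hstar.edges, s.card = H.rank) ∧
      (∀ x ∈ Hstar.verts, Hstar.degree x = H.maxDegree) ∧
      Hstar.QuasiLinear t ∧
      H.verts.image Sum.inl ⊆ Hstar.verts ∧
      Set.InjOn f ↑H.edges ∧
      (∀ s ∈ H.edges, f s ∈ Hstar.edges ∧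
        s.image Sum.inl ⊆ f s ∧
        f s ∩ H.verts.image Sum.inl = s.image Sum.inl) := by
  classical
  rcases Nat.eq_zero_or_pos t with rfl | ht
  · -- degenerate case t = 0 : all edges are singletons and the hypergraph is 1-regular like
    have hsing : ∀ s ∈ H.edges, ∀ x ∈ s, ∀ y ∈ s, x = y := by
      intro s hs x hx y hy
      by_contra hxy
      have h0 := hql.2 x (H.edge_sub s hs hx) y (H.edge_sub s hs hy) hxy
      have h1 : s ∈ H.edges.filter fun s => x ∈ s ∧ y ∈ s := Finset.mem_filter.2 ⟨hs, hx, hy⟩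
      have h2 := Finset.card_pos.2 ⟨s, h1⟩
      omega
    have hcard1 : ∀ s ∈ H.edges, s.card = 1 := by
      intro s hs
      obtain ⟨x, hx⟩ := H.edge_nonempty s hs
      rw [Finset.eq_singleton_iff_unique_mem.2 ⟨hx, fun y hy => hsing s hs y hy x hx⟩]
      exact Finset.card_singleton x
    have hrank : H.rank = 1 := le_antisymm
      (Finset.sup_le fun s hs => le_of_eq (hcard1 s hs)) (QLAux.one_le_rank hne)
    have hmax : H.maxDegree = 1 := le_antisymm
      (QLAux.maxDegree_le_one (le_of_eq hrank)) (QLAux.one_le_maxDegree hne)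
    refine ⟨⟨H.verts.image Sum.inl, H.verts.image fun x => {Sum.inl x}, ?_, ?_⟩,
      fun s => s.image Sum.inl, ?_, ?_, ⟨?_, ?_⟩, subset_rfl, ?_, ?_⟩
    · intro e he
      obtain ⟨x, hx, rfl⟩ := Finset.mem_image.1 he
      simpa using Finset.mem_image_of_mem (Sum.inl : V → V ⊕ ℕ) hx
    · intro e he
      obtain ⟨x, hx, rfl⟩ := Finset.mem_image.1 he
      exact ⟨Sum.inl x, Finset.mem_singleton_self _⟩
    · intro e he
      obtain ⟨x, hx, rfl⟩ := Finset.mem_image.1 he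
      simp [hrank]
    · intro x hx
      obtain ⟨x₀, hx₀, rfl⟩ := Finset.mem_image.1 hx
      have hfil : ((H.verts.image fun x => ({Sum.inl x} : Finset (V ⊕ ℕ))).filter
          fun e => Sum.inl x₀ ∈ e) = {({Sum.inl x₀} : Finset (V ⊕ ℕ))} := by
        ext e
        simp only [Finset.mem_filter, Finset.mem_image, Finset.mem_singleton]
        constructor
        · rintro ⟨⟨z, hz, rfl⟩, hmem⟩
          obtain rfl : x₀ = z := by simpa using hmem
          rfl
        · rintro rfl
          exact ⟨⟨x₀, hx₀, rfl⟩, Finset.mem_singleton_self _⟩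
      show ((H.verts.image fun x => ({Sum.inl x} : Finset (V ⊕ ℕ))).filter
        fun e => Sum.inl x₀ ∈ e).card = H.maxDegree
      rw [hfil, hmax, Finset.card_singleton]
    · intro e he e' he' hne'
      obtain ⟨x, hx, rfl⟩ := Finset.mem_image.1 he
      obtain ⟨x', hx', rfl⟩ := Finset.mem_image.1 he'
      have hxx' : (Sum.inl x : V ⊕ ℕ) ∉ ({Sum.inl x'} : Finset (V ⊕ ℕ)) := by
        intro hcon
        exact hne' (by simpa using hcon)
      rw [Finset.singleton_inter_of_notMem hxx']
      simp
    · intro a ha b hb hab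
      have hfil : ((H.verts.image fun x => ({Sum.inl x} : Finset (V ⊕ ℕ))).filter
          fun e => a ∈ e ∧ b ∈ e) = ∅ := by
        rw [Finset.filter_eq_empty_iff]
        intro e he
        obtain ⟨z, hz, rfl⟩ := Finset.mem_image.1 he
        rintro ⟨h1, h2⟩
        exact hab ((Finset.mem_singleton.1 h1).trans (Finset.mem_singleton.1 h2).symm)
      show ((H.verts.image fun x => ({Sum.inl x} : Finset (V ⊕ ℕ))).filter
        fun e => a ∈ e ∧ b ∈ e).card ≤ 0
      rw [hfil]
      simp
    · intro s hs s' hs' h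
      exact Finset.image_injective Sum.inl_injective h
    · intro s hs
      obtain ⟨x, hx⟩ := Finset.card_eq_one.1 (hcard1 s hs)
      subst hx
      have hxv : x ∈ H.verts := H.edge_sub _ hs (Finset.mem_singleton_self x)
      refine ⟨?_, subset_rfl, ?_⟩
      · show Finset.image Sum.inl ({x} : Finset V) ∈
          H.verts.image fun x => ({Sum.inl x} : Finset (V ⊕ ℕ))
        rw [Finset.image_singleton]
        exact Finset.mem_image.2 ⟨x, hxv, rfl⟩
      · exact Finset.inter_eq_left.2 (Finset.image_subset_image (H.edge_sub _ hs))
  · -- main case : t ≥ 1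
    have hr1 : 1 ≤ H.rank := QLAux.one_le_rank hne
    have hΔ1 : 1 ≤ H.maxDegree := QLAux.one_le_maxDegree hne
    have hcard : ∀ s ∈ H.edges, s.card ≤ H.rank := fun s hs => Finset.le_sup hs
    have hΔr1 : H.rank = 1 → H.maxDegree ≤ 1 := fun h => QLAux.maxDegree_le_one (le_of_eq h)
    obtain ⟨p, hple, hp⟩ := Nat.exists_infinite_primes (max H.rank H.maxDegree)
    have hrp : H.rank ≤ p := le_trans (le_max_left _ _) hple
    have hΔp : H.maxDegree ≤ p := le_trans (le_max_right _ _) hple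
    haveI : NeZero p := ⟨hp.pos.ne'⟩
    obtain ⟨enc, henc⟩ : ∃ enc : ((V ⊕ (Finset V × ℕ)) × Fin H.rank × ZMod p) → ℕ,
        Set.InjOn enc ↑(QLAux.bigVerts H H.rank p) := by
      have e := Fintype.equivFin {x // x ∈ QLAux.bigVerts H H.rank p}
      refine ⟨fun x => if h : x ∈ QLAux.bigVerts H H.rank p then (e ⟨x, h⟩ : ℕ) else 0, ?_⟩
      intro x hx y hy hxy
      rw [Finset.mem_coe] at hx hy
      dsimp only at hxy
      rw [dif_pos hx, dif_pos hy] at hxy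
      exact congrArg Subtype.val (e.injective (Fin.ext hxy))
    set c₀ : Fin H.rank × ZMod p := ((⟨0, hr1⟩ : Fin H.rank), (0 : ZMod p)) with hc₀
    set g : ((V ⊕ (Finset V × ℕ)) × Fin H.rank × ZMod p) → V ⊕ ℕ :=
      QLAux.gmap H.rank p c₀ enc with hgdef
    have hg : Set.InjOn g ↑(QLAux.bigVerts H H.rank p) := QLAux.gmap_injOn henc
    set H' : Hypergraph' ((V ⊕ (Finset V × ℕ)) × Fin H.rank × ZMod p) :=
      ⟨QLAux.bigVerts H H.rank p, QLAux.bigEdges H H.rank p H.maxDegree,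
        QLAux.big_edge_sub, QLAux.big_edge_nonempty hr1⟩ with hH'
    have hg' : Set.InjOn g ↑H'.verts := hg
    set Hstar := QLAux.mapHG H' g with hHstar
    set f : Finset V → Finset (V ⊕ ℕ) := fun s => (QLAux.oldE H.rank p s c₀).image g with hf
    have hmem : ∀ s ∈ H.edges, f s ∈ Hstar.edges := by
      intro s hs
      exact Finset.mem_image.2 ⟨QLAux.oldE H.rank p s c₀,
        QLAux.mem_bigEdges.2 (Or.inl ⟨s, c₀, hs, rfl⟩), rfl⟩
    have hsubf : ∀ s ∈ H.edges, s.image Sum.inl ⊆ f s := by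
      intro s hs x hx
      obtain ⟨v, hv, rfl⟩ := Finset.mem_image.1 hx
      exact Finset.mem_image.2 ⟨(Sum.inl v, c₀),
        QLAux.mem_oldE.2 ⟨QLAux.mem_pe_inl.2 hv, rfl⟩, QLAux.gmap_inl_c₀⟩
    have hint : ∀ s ∈ H.edges, f s ∩ H.verts.image Sum.inl = s.image Sum.inl := by
      intro s hs
      ext x
      constructor
      · intro hx
        obtain ⟨hfs, hxv⟩ := Finset.mem_inter.1 hx
        obtain ⟨u, hu, rfl⟩ := Finset.mem_image.1 hxv
        obtain ⟨z, hz, hgz⟩ := Finset.mem_image.1 hfs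
        have hz' : z = (Sum.inl u, c₀) := QLAux.gmap_eq_inl_iff.1 hgz
        subst hz'
        have hpe : Sum.inl u ∈ QLAux.pe H.rank s := (QLAux.mem_oldE.1 hz).1
        exact Finset.mem_image.2 ⟨u, QLAux.mem_pe_inl.1 hpe, rfl⟩
      · intro hx
        obtain ⟨v, hv, rfl⟩ := Finset.mem_image.1 hx
        refine Finset.mem_inter.2 ⟨hsubf s hs (Finset.mem_image.2 ⟨v, hv, rfl⟩),
          Finset.mem_image.2 ⟨v, H.edge_sub s hs hv, rfl⟩⟩
    have hinj : Set.InjOn f ↑H.edges := by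
      intro s hs s' hs' h
      apply Finset.image_injective (f := (Sum.inl : V → V ⊕ ℕ)) Sum.inl_injective
      rw [← hint s hs, ← hint s' hs', h]
    refine ⟨Hstar, f, ?_, ?_, ?_, ?_, hinj, fun s hs => ⟨hmem s hs, hsubf s hs, hint s hs⟩⟩
    · intro e he
      obtain ⟨e₀, he₀, rfl⟩ := Finset.mem_image.1 he
      rw [QLAux.map_card hg' he₀]
      exact QLAux.big_uniform hcard e₀ he₀
    · intro x hx
      obtain ⟨z, hz, rfl⟩ := Finset.mem_image.1 hx
      rw [QLAux.map_degree hg' hz]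
      obtain ⟨w, c⟩ := z
      have hw : w ∈ QLAux.VP H H.rank := (Finset.mem_product.1 hz).1
      exact QLAux.big_degree hp hrp hΔp hr1 hcard hΔr1 hw (QLAux.pdeg_le hw hΔ1)
    · exact QLAux.map_ql hg' ⟨QLAux.big_ql1 hp hrp hΔp ht hql, QLAux.big_ql2 hp hrp ht hql⟩
    · intro x hx
      obtain ⟨v, hv, rfl⟩ := Finset.mem_image.1 hx
      exact Finset.mem_image.2 ⟨(Sum.inl v, c₀),
        Finset.mem_product.2 ⟨QLAux.mem_VP_inl.2 hv, Finset.mem_univ _⟩, QLAux.gmap_inl_c₀⟩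
end

section
/- Let a,t be integers with 1≤t<a. For every ε>0 there exists an integer B such that for every integer b≥B, every K_{2,t+1}-free (a,b)-regular bipartite graph G has the property that the square of its line graph L(G)² is (1 − (4a−3)t/(2a−1)² − ε)-sparse. -/
/-- Two edges e₁ ≠ e₂ are within distance 2 in the line graph: they share an endpoint,
or some edge of G joins an endpoint of e₁ to an endpoint of e₂. -/
def StrongAdj {α : Type*} (G : SimpleGraph α) (e₁ e₂ : Sym2 α) : Prop :=
  e₁ ≠ e₂ ∧ ∃ u v, u ∈ e₁ ∧ v ∈ e₂ ∧ (u = v ∨ G.Adj u v)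

/-- A strong edge k-coloring of G with colors {0, ..., k-1}. -/
def HasStrongEdgeColoring {α : Type*} (G : SimpleGraph α) (k : ℕ) : Prop :=
  ∃ φ : Sym2 α → ℕ,
    (∀ e ∈ G.edgeSet, φ e < k) ∧
    (∀ e₁ ∈ G.edgeSet, ∀ e₂ ∈ G.edgeSet, StrongAdj G e₁ e₂ → φ e₁ ≠ φ e₂)

/-- χ'ₛ(G): the strong chromatic index. -/
noncomputable def strongChromaticIndex {α : Type*} (G : SimpleGraph α) : ℕ :=
  sInf {k | HasStrongEdgeColoring G k}

/-- G has no subgraph isomorphic to K_{2,m}. -/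
def K2Free {α : Type*} (G : SimpleGraph α) (m : ℕ) : Prop :=
  ¬ ∃ (u₁ u₂ : α) (W : Finset α), u₁ ≠ u₂ ∧ W.card = m ∧
      ∀ w ∈ W, G.Adj u₁ w ∧ G.Adj u₂ w

/-- A graph on α ⊕ β is bipartite with parts α, β: all edges go between the parts. -/
def BipartiteBetween {α β : Type*} (G : SimpleGraph (α ⊕ β)) : Prop :=
  (∀ x x' : α, ¬ G.Adj (Sum.inl x) (Sum.inl x')) ∧
  (∀ y y' : β, ¬ G.Adj (Sum.inr y) (Sum.inr y'))

/-- G is (a,b)-regular: every vertex of the first part has degree a and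
every vertex of the second part has degree b. -/
def BiregularOn {α β : Type*} (G : SimpleGraph (α ⊕ β)) (a b : ℕ) : Prop :=
  (∀ x : α, (G.neighborSet (Sum.inl x)).ncard = a) ∧
  (∀ y : β, (G.neighborSet (Sum.inr y)).ncard = b)

/-- D₂(e): the set of edges e' ≠ e at distance at most 2 from e in the line graph. -/
def D2 {α : Type*} (G : SimpleGraph α) (e : Sym2 α) : Set (Sym2 α) :=
  {e' | e' ∈ G.edgeSet ∧ StrongAdj G e e'}

/-- ζ(e', e) = |D₂(e') ∩ D₂(e)|. -/
noncomputable def zeta {α : Type*} (G : SimpleGraph α) (e' e : Sym2 α) : ℕ :=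
  (D2 G e' ∩ D2 G e).ncard

/-- The square L(G)² of the line graph of G: vertices are the edges of G, two
distinct edges adjacent when within distance 2 in the line graph. -/
def lineSquare {α : Type*} (G : SimpleGraph α) : SimpleGraph (Sym2 α) where
  Adj e₁ e₂ := e₁ ∈ G.edgeSet ∧ e₂ ∈ G.edgeSet ∧ StrongAdj G e₁ e₂
  symm := by
    constructor
    rintro e₁ e₂ ⟨h₁, h₂, hne, u, v, hu, hv, h⟩
    exact ⟨h₂, h₁, Ne.symm hne, v, u, hv, hu, h.imp Eq.symm fun h' => h'.symm⟩
  loopless := by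
    constructor
    rintro e ⟨_, _, hne, _⟩
    exact hne rfl

/-- The maximum degree of a finite graph. -/
noncomputable def maxDeg {α : Type*} (G : SimpleGraph α) [Fintype α] : ℕ :=
  Finset.univ.sup fun v => (G.neighborSet v).ncard

/-- G is σ-sparse: for every vertex v, the subgraph induced by the neighborhood of v
has at most (1-σ)·C(Δ(G),2) edges. -/
noncomputable def IsSparse {α : Type*} (G : SimpleGraph α) [Fintype α] (σ : ℝ) : Prop :=
  ∀ v : α,
    (({e ∈ G.edgeSet | ∀ x ∈ e, x ∈ G.neighborSet v}).ncard : ℝ) ≤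
      (1 - σ) * ((maxDeg G).choose 2)


open Finset Sum

attribute [local instance 10] Classical.propDecidable


attribute [local instance 10] Classical.propDecidable

section S1
variable {α β : Type} [Fintype α] [Fintype β] [DecidableEq α] [DecidableEq β]

def enc (f : α × β) : Sym2 (α ⊕ β) := s(Sum.inl f.1, Sum.inr f.2)

lemma enc_inj : Function.Injective (enc (α := α) (β := β)) := by
  rintro ⟨p, q⟩ ⟨p', q'⟩ h
  simp only [enc, Sym2.eq_iff] at h
  rcases h with ⟨h1, h2⟩ | ⟨h1, h2⟩ <;> simp_all

variable (G : SimpleGraph (α ⊕ β))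

lemma crossRep (hbip : BipartiteBetween G) {e : Sym2 (α ⊕ β)} (he : e ∈ G.edgeSet) :
    ∃ f : α × β, G.Adj (inl f.1) (inr f.2) ∧ e = enc f := by
  induction e using Sym2.ind with
  | _ z w =>
    rw [SimpleGraph.mem_edgeSet] at he
    match z, w with
    | inl p, inl p' => exact absurd he (hbip.1 _ _)
    | inr q, inr q' => exact absurd he (hbip.2 _ _)
    | inl p, inr q => exact ⟨(p, q), he, rfl⟩
    | inr q, inl p => exact ⟨(p, q), he.symm, Sym2.eq_swap⟩

lemma strong_link (hbip : BipartiteBetween G) {u : α} {w : β} {p : α} {q : β}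
    (hf : G.Adj (inl u) (inr w)) (hf' : G.Adj (inl p) (inr q))
    (h : StrongAdj G (enc (u, w)) (enc (p, q))) :
    G.Adj (inl p) (inr w) ∨ G.Adj (inl u) (inr q) := by
  obtain ⟨-, z₁, z₂, hz₁, hz₂, hor⟩ := h
  simp only [enc, Sym2.mem_iff] at hz₁ hz₂
  rcases hz₁ with rfl | rfl <;> rcases hz₂ with rfl | rfl <;>
    rcases hor with heq | hadj
  · exact Or.inl (by rw [← inl.inj heq]; exact hf)
  · exact absurd hadj (hbip.1 _ _)
  · exact absurd heq (by simp)
  · exact Or.inr hadj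
  · exact absurd heq (by simp)
  · exact Or.inl hadj.symm
  · exact Or.inr (by rw [← inr.inj heq]; exact hf)
  · exact absurd hadj (hbip.2 _ _)

lemma deg_snd (hbip : BipartiteBetween G) {a b : ℕ} (hreg : BiregularOn G a b) (p : α) :
    (univ.filter fun q : β => G.Adj (inl p) (inr q)).card = a := by
  have h1 : G.neighborSet (inl p) = inr '' {q | G.Adj (inl p) (inr q)} := by
    ext z
    cases z with
    | inl p' => simp [SimpleGraph.mem_neighborSet, hbip.1 p p']
    | inr q => simp [SimpleGraph.mem_neighborSet]
  have h2 := hreg.1 p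
  rw [h1, Set.ncard_image_of_injective _ inr_injective] at h2
  have h3 : {q | G.Adj (inl p) (inr q)} = ↑(univ.filter fun q : β => G.Adj (inl p) (inr q)) := by
    ext q; simp
  rw [h3, Set.ncard_coe_finset] at h2
  exact h2

lemma deg_fst (hbip : BipartiteBetween G) {a b : ℕ} (hreg : BiregularOn G a b) (q : β) :
    (univ.filter fun p : α => G.Adj (inl p) (inr q)).card = b := by
  have h1 : G.neighborSet (inr q) = inl '' {p | G.Adj (inl p) (inr q)} := by
    ext z
    cases z with
    | inl p => simp [SimpleGraph.mem_neighborSet, SimpleGraph.adj_comm]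
    | inr q' => simp [SimpleGraph.mem_neighborSet, hbip.2 q q']
  have h2 := hreg.2 q
  rw [h1, Set.ncard_image_of_injective _ inl_injective] at h2
  have h3 : {p | G.Adj (inl p) (inr q)} = ↑(univ.filter fun p : α => G.Adj (inl p) (inr q)) := by
    ext p; simp
  rw [h3, Set.ncard_coe_finset] at h2
  exact h2

lemma codeg_beta {m : ℕ} (hK : K2Free G m) {w₁ w₂ : β} (h : w₁ ≠ w₂) :
    (univ.filter fun p : α => G.Adj (inl p) (inr w₁) ∧ G.Adj (inl p) (inr w₂)).card < m := by
  by_contra hc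
  push_neg at hc
  obtain ⟨W₀, hsub, hcard⟩ := Finset.exists_subset_card_eq hc
  refine hK ⟨inr w₁, inr w₂, W₀.image inl, by simpa using h, ?_, ?_⟩
  · rw [Finset.card_image_of_injective _ inl_injective, hcard]
  · intro z hz
    simp only [Finset.mem_image] at hz
    obtain ⟨p, hp, rfl⟩ := hz
    have := hsub hp
    rw [Finset.mem_filter] at this
    exact ⟨this.2.1.symm, this.2.2.symm⟩

lemma codeg_alpha {m : ℕ} (hK : K2Free G m) {u₁ u₂ : α} (h : u₁ ≠ u₂) :
    (univ.filter fun q : β => G.Adj (inl u₁) (inr q) ∧ G.Adj (inl u₂) (inr q)).card < m := by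
  by_contra hc
  push_neg at hc
  obtain ⟨W₀, hsub, hcard⟩ := Finset.exists_subset_card_eq hc
  refine hK ⟨inl u₁, inl u₂, W₀.image inr, by simpa using h, ?_, ?_⟩
  · rw [Finset.card_image_of_injective _ inr_injective, hcard]
  · intro z hz
    simp only [Finset.mem_image] at hz
    obtain ⟨q, hq, rfl⟩ := hz
    have := hsub hq
    rw [Finset.mem_filter] at this
    exact ⟨this.2.1, this.2.2⟩




lemma count_snd (P : α × β → Prop) [DecidablePred P] (S : Finset β) (k : ℕ)
    (h1 : ∀ f, P f → f.2 ∈ S)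
    (h2 : ∀ q ∈ S, (univ.filter fun p => P (p, q)).card ≤ k) :
    (univ.filter P).card ≤ S.card * k := by
  rw [Finset.card_eq_sum_card_fiberwise (f := Prod.snd) (t := S)
    (fun f hf => h1 f (Finset.mem_filter.mp hf).2)]
  calc ∑ q ∈ S, ((univ.filter P).filter fun f => f.2 = q).card
      ≤ ∑ _q ∈ S, k := by
        refine Finset.sum_le_sum fun q hq => le_trans ?_ (h2 q hq)
        refine Finset.card_le_card_of_injOn Prod.fst ?_ ?_
        · intro f hf
          simp only [Finset.mem_coe, Finset.mem_filter] at hf ⊢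
          refine ⟨Finset.mem_univ _, ?_⟩
          have : f = (f.1, q) := by rw [← hf.2]
          rw [← this]; exact hf.1.2
        · intro f hf g hg hfg
          simp only [Finset.coe_filter, Set.mem_setOf_eq] at hf hg
          exact Prod.ext hfg (hf.2.trans hg.2.symm)
    _ = S.card * k := by rw [Finset.sum_const, smul_eq_mul]

lemma count_fst (P : α × β → Prop) [DecidablePred P] (S : Finset α) (k : ℕ)
    (h1 : ∀ f, P f → f.1 ∈ S)
    (h2 : ∀ p ∈ S, (univ.filter fun q => P (p, q)).card ≤ k) :
    (univ.filter P).card ≤ S.card * k := by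
  rw [Finset.card_eq_sum_card_fiberwise (f := Prod.fst) (t := S)
    (fun f hf => h1 f (Finset.mem_filter.mp hf).2)]
  calc ∑ p ∈ S, ((univ.filter P).filter fun f => f.1 = p).card
      ≤ ∑ _p ∈ S, k := by
        refine Finset.sum_le_sum fun p hp => le_trans ?_ (h2 p hp)
        refine Finset.card_le_card_of_injOn Prod.snd ?_ ?_
        · intro f hf
          simp only [Finset.mem_coe, Finset.mem_filter] at hf ⊢
          refine ⟨Finset.mem_univ _, ?_⟩
          have : f = (p, f.2) := by rw [← hf.2]
          rw [← this]; exact hf.1.2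
        · intro f hf g hg hfg
          simp only [Finset.coe_filter, Set.mem_setOf_eq] at hf hg
          exact Prod.ext (hf.2.trans hg.2.symm) hfg
    _ = S.card * k := by rw [Finset.sum_const, smul_eq_mul]

lemma count_fst_ge (P : α × β → Prop) [DecidablePred P] (S : Finset α) (k : ℕ)
    (h : ∀ p ∈ S, k ≤ (univ.filter fun q => P (p, q)).card) :
    S.card * k ≤ (univ.filter P).card := by
  classical
  have hdisj : ∀ p₁ ∈ S, ∀ p₂ ∈ S, p₁ ≠ p₂ →
      Disjoint ((univ.filter fun q => P (p₁, q)).image fun q => (p₁, q))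
        ((univ.filter fun q => P (p₂, q)).image fun q => (p₂, q)) := by
    intro p₁ _ p₂ _ hne
    simp only [Finset.disjoint_left, Finset.mem_image]
    rintro f ⟨q₁, _, rfl⟩ ⟨q₂, _, h2⟩
    exact hne (congrArg Prod.fst h2).symm
  calc S.card * k = ∑ _p ∈ S, k := by rw [Finset.sum_const, smul_eq_mul]
    _ ≤ ∑ p ∈ S, ((univ.filter fun q => P (p, q)).image fun q => (p, q)).card := by
        refine Finset.sum_le_sum fun p hp => ?_
        rw [Finset.card_image_of_injective _ (fun q₁ q₂ h => (Prod.mk.injEq _ _ _ _).mp h |>.2)]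
        exact h p hp
    _ = (S.biUnion fun p => (univ.filter fun q => P (p, q)).image fun q => (p, q)).card :=
        (Finset.card_biUnion hdisj).symm
    _ ≤ (univ.filter P).card := by
        refine Finset.card_le_card ?_
        intro f hf
        simp only [Finset.mem_biUnion, Finset.mem_image] at hf
        obtain ⟨p, _, q, hq, rfl⟩ := hf
        simp only [Finset.mem_filter, Finset.mem_univ, true_and]
        exact (Finset.mem_filter.mp hq).2

lemma count_snd_ge (P : α × β → Prop) [DecidablePred P] (S : Finset β) (k : ℕ)
    (h : ∀ q ∈ S, k ≤ (univ.filter fun p => P (p, q)).card) :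
    S.card * k ≤ (univ.filter P).card := by
  classical
  have hdisj : ∀ q₁ ∈ S, ∀ q₂ ∈ S, q₁ ≠ q₂ →
      Disjoint ((univ.filter fun p => P (p, q₁)).image fun p => (p, q₁))
        ((univ.filter fun p => P (p, q₂)).image fun p => (p, q₂)) := by
    intro q₁ _ q₂ _ hne
    simp only [Finset.disjoint_left, Finset.mem_image]
    rintro f ⟨p₁, _, rfl⟩ ⟨p₂, _, h2⟩
    exact hne (congrArg Prod.snd h2).symm
  calc S.card * k = ∑ _q ∈ S, k := by rw [Finset.sum_const, smul_eq_mul]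
    _ ≤ ∑ q ∈ S, ((univ.filter fun p => P (p, q)).image fun p => (p, q)).card := by
        refine Finset.sum_le_sum fun q hq => ?_
        rw [Finset.card_image_of_injective _ (fun p₁ p₂ h => (Prod.mk.injEq _ _ _ _).mp h |>.1)]
        exact h q hq
    _ = (S.biUnion fun q => (univ.filter fun p => P (p, q)).image fun p => (p, q)).card :=
        (Finset.card_biUnion hdisj).symm
    _ ≤ (univ.filter P).card := by
        refine Finset.card_le_card ?_
        intro f hf
        simp only [Finset.mem_biUnion, Finset.mem_image] at hf
        obtain ⟨q, _, p, hp, rfl⟩ := hf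
        simp only [Finset.mem_filter, Finset.mem_univ, true_and]
        exact (Finset.mem_filter.mp hp).2

def Pxy (x : α) (y : β) : α × β → Prop := fun f =>
  G.Adj (inl f.1) (inr f.2) ∧ (G.Adj (inl f.1) (inr y) ∨ G.Adj (inl x) (inr f.2)) ∧ f ≠ (x, y)

def Hgr (x : α) (y : β) : SimpleGraph (α × β) where
  Adj f g := f ≠ g ∧ Pxy G x y f ∧ Pxy G x y g ∧
    (G.Adj (inl g.1) (inr f.2) ∨ G.Adj (inl f.1) (inr g.2))
  symm := ⟨by rintro f g ⟨h0, h1, h2, h3⟩; exact ⟨h0.symm, h2, h1, h3.symm⟩⟩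
  loopless := ⟨fun f h => h.1 rfl⟩


lemma degFg {a t b : ℕ} (hbip : BipartiteBetween G) (hreg : BiregularOn G a b)
    (hK : K2Free G (t + 1)) (x : α) (y : β) (hxy : G.Adj (inl x) (inr y))
    (u : α) (w : β) (huw : G.Adj (inl u) (inr w)) (hu : u ≠ x) (hw : w ≠ y) :
    (Hgr G x y).degree (u, w) ≤ t * b + (a * t + (t * a + a * t)) := by
  classical
  rw [SimpleGraph.degree, SimpleGraph.neighborFinset_eq_filter]
  set W1 : Finset (α × β) := univ.filter (fun g : α × β =>
    G.Adj (inl g.1) (inr g.2) ∧ G.Adj (inl u) (inr g.2) ∧ G.Adj (inl x) (inr g.2)) with hW1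
  set W2 : Finset (α × β) := univ.filter (fun g : α × β =>
    G.Adj (inl g.1) (inr g.2) ∧ G.Adj (inl u) (inr g.2) ∧ ¬ G.Adj (inl x) (inr g.2) ∧
      G.Adj (inl g.1) (inr y)) with hW2
  set W3 : Finset (α × β) := univ.filter (fun g : α × β =>
    G.Adj (inl g.1) (inr g.2) ∧ ¬ G.Adj (inl u) (inr g.2) ∧ G.Adj (inl g.1) (inr w) ∧
      G.Adj (inl g.1) (inr y)) with hW3
  set W4 : Finset (α × β) := univ.filter (fun g : α × β =>
    G.Adj (inl g.1) (inr g.2) ∧ ¬ G.Adj (inl u) (inr g.2) ∧ G.Adj (inl g.1) (inr w) ∧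
      ¬ G.Adj (inl g.1) (inr y) ∧ G.Adj (inl x) (inr g.2)) with hW4
  have hcov : univ.filter ((Hgr G x y).Adj (u, w)) ⊆ W1 ∪ (W2 ∪ (W3 ∪ W4)) := by
    intro g hg
    rw [Finset.mem_filter] at hg
    obtain ⟨-, -, -, ⟨hg1, hg2, -⟩, hlink⟩ := hg
    simp only [hW1, hW2, hW3, hW4, Finset.mem_union, Finset.mem_filter, Finset.mem_univ,
      true_and]
    by_cases h1 : G.Adj (inl u) (inr g.2)
    · by_cases h2 : G.Adj (inl x) (inr g.2)
      · exact Or.inl ⟨hg1, h1, h2⟩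
      · rcases hg2 with h3 | h3
        · exact Or.inr (Or.inl ⟨hg1, h1, h2, h3⟩)
        · exact absurd h3 h2
    · have h3 : G.Adj (inl g.1) (inr w) := by
        rcases hlink with h | h
        · exact h
        · exact absurd h h1
      by_cases h4 : G.Adj (inl g.1) (inr y)
      · exact Or.inr (Or.inr (Or.inl ⟨hg1, h1, h3, h4⟩))
      · rcases hg2 with h5 | h5
        · exact absurd h5 h4
        · exact Or.inr (Or.inr (Or.inr ⟨hg1, h1, h3, h4, h5⟩))
  have hW1c : W1.card ≤ t * b := by
    have hS : (univ.filter fun q : β => G.Adj (inl u) (inr q) ∧ G.Adj (inl x) (inr q)).card ≤ t :=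
      Nat.lt_succ_iff.mp (codeg_alpha G hK hu)
    calc W1.card ≤ (univ.filter fun q : β =>
        G.Adj (inl u) (inr q) ∧ G.Adj (inl x) (inr q)).card * b := by
          refine count_snd _ _ b (fun g hg => ?_) (fun q hq => ?_)
          · rw [Finset.mem_filter]; exact ⟨Finset.mem_univ _, hg.2⟩
          · calc (univ.filter fun p : α => G.Adj (inl p) (inr q) ∧ G.Adj (inl u) (inr q) ∧
                G.Adj (inl x) (inr q)).card
                ≤ (univ.filter fun p : α => G.Adj (inl p) (inr q)).card :=
                  Finset.card_le_card (fun p hp => by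
                    rw [Finset.mem_filter] at hp ⊢; exact ⟨hp.1, hp.2.1⟩)
              _ = b := deg_fst G hbip hreg q
              _ ≤ b := le_refl b
      _ ≤ t * b := Nat.mul_le_mul_right b hS
  have hW2c : W2.card ≤ a * t := by
    have hS : (univ.filter fun q : β => G.Adj (inl u) (inr q) ∧ ¬ G.Adj (inl x) (inr q)).card
        ≤ a := by
      calc _ ≤ (univ.filter fun q : β => G.Adj (inl u) (inr q)).card :=
            Finset.card_le_card (fun q hq => by
              rw [Finset.mem_filter] at hq ⊢; exact ⟨hq.1, hq.2.1⟩)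
        _ = a := deg_snd G hbip hreg u
    calc W2.card ≤ (univ.filter fun q : β =>
        G.Adj (inl u) (inr q) ∧ ¬ G.Adj (inl x) (inr q)).card * t := by
          refine count_snd _ _ t (fun g hg => ?_) (fun q hq => ?_)
          · rw [Finset.mem_filter]; exact ⟨Finset.mem_univ _, hg.2.1, hg.2.2.1⟩
          · rw [Finset.mem_filter] at hq
            have hqy : q ≠ y := fun hc => hq.2.2 (hc ▸ hxy)
            calc (univ.filter fun p : α => G.Adj (inl p) (inr q) ∧ G.Adj (inl u) (inr q) ∧
                ¬ G.Adj (inl x) (inr q) ∧ G.Adj (inl p) (inr y)).card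
                ≤ (univ.filter fun p : α => G.Adj (inl p) (inr q) ∧ G.Adj (inl p) (inr y)).card :=
                  Finset.card_le_card (fun p hp => by
                    rw [Finset.mem_filter] at hp ⊢; exact ⟨hp.1, hp.2.1, hp.2.2.2.2⟩)
              _ ≤ t := Nat.lt_succ_iff.mp (codeg_beta G hK hqy)
      _ ≤ a * t := Nat.mul_le_mul_right t hS
  have hW3c : W3.card ≤ t * a := by
    have hS : (univ.filter fun p : α => G.Adj (inl p) (inr w) ∧ G.Adj (inl p) (inr y)).card
        ≤ t := Nat.lt_succ_iff.mp (codeg_beta G hK hw)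
    calc W3.card ≤ (univ.filter fun p : α =>
        G.Adj (inl p) (inr w) ∧ G.Adj (inl p) (inr y)).card * a := by
          refine count_fst _ _ a (fun g hg => ?_) (fun p hp => ?_)
          · rw [Finset.mem_filter]; exact ⟨Finset.mem_univ _, hg.2.2.1, hg.2.2.2⟩
          · calc (univ.filter fun q : β => G.Adj (inl p) (inr q) ∧ ¬ G.Adj (inl u) (inr q) ∧
                G.Adj (inl p) (inr w) ∧ G.Adj (inl p) (inr y)).card
                ≤ (univ.filter fun q : β => G.Adj (inl p) (inr q)).card :=
                  Finset.card_le_card (fun q hq => by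
                    rw [Finset.mem_filter] at hq ⊢; exact ⟨hq.1, hq.2.1⟩)
              _ = a := deg_snd G hbip hreg p
      _ ≤ t * a := Nat.mul_le_mul_right a hS
  have hW4c : W4.card ≤ a * t := by
    have hS : (univ.filter fun q : β => G.Adj (inl x) (inr q) ∧ ¬ G.Adj (inl u) (inr q)).card
        ≤ a := by
      calc _ ≤ (univ.filter fun q : β => G.Adj (inl x) (inr q)).card :=
            Finset.card_le_card (fun q hq => by
              rw [Finset.mem_filter] at hq ⊢; exact ⟨hq.1, hq.2.1⟩)
        _ = a := deg_snd G hbip hreg x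
    calc W4.card ≤ (univ.filter fun q : β =>
        G.Adj (inl x) (inr q) ∧ ¬ G.Adj (inl u) (inr q)).card * t := by
          refine count_snd _ _ t (fun g hg => ?_) (fun q hq => ?_)
          · rw [Finset.mem_filter]; exact ⟨Finset.mem_univ _, hg.2.2.2.2, hg.2.1⟩
          · rw [Finset.mem_filter] at hq
            have hqw : q ≠ w := fun hc => hq.2.2 (hc ▸ huw)
            calc (univ.filter fun p : α => G.Adj (inl p) (inr q) ∧ ¬ G.Adj (inl u) (inr q) ∧
                G.Adj (inl p) (inr w) ∧ ¬ G.Adj (inl p) (inr y) ∧ G.Adj (inl x) (inr q)).card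
                ≤ (univ.filter fun p : α => G.Adj (inl p) (inr q) ∧ G.Adj (inl p) (inr w)).card :=
                  Finset.card_le_card (fun p hp => by
                    rw [Finset.mem_filter] at hp ⊢; exact ⟨hp.1, hp.2.1, hp.2.2.2.1⟩)
              _ ≤ t := Nat.lt_succ_iff.mp (codeg_beta G hK hqw)
      _ ≤ a * t := Nat.mul_le_mul_right t hS
  calc (univ.filter ((Hgr G x y).Adj (u, w))).card
      ≤ (W1 ∪ (W2 ∪ (W3 ∪ W4))).card := Finset.card_le_card hcov
    _ ≤ W1.card + (W2.card + (W3.card + W4.card)) := by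
        refine le_trans (Finset.card_union_le _ _) ?_
        refine Nat.add_le_add_left ?_ _
        refine le_trans (Finset.card_union_le _ _) ?_
        exact Nat.add_le_add_left (Finset.card_union_le _ _) _
    _ ≤ t * b + (a * t + (t * a + a * t)) := by
        exact Nat.add_le_add hW1c (Nat.add_le_add hW2c (Nat.add_le_add hW3c hW4c))

lemma degFy {a t b : ℕ} (hbip : BipartiteBetween G) (hreg : BiregularOn G a b)
    (hK : K2Free G (t + 1)) (x : α) (y : β) (hxy : G.Adj (inl x) (inr y))
    (u : α) (huy : G.Adj (inl u) (inr y)) (hu : u ≠ x) :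
    (Hgr G x y).degree (u, y) ≤ t * b + (a * t + b * (a - 1)) := by
  classical
  rw [SimpleGraph.degree, SimpleGraph.neighborFinset_eq_filter]
  set W1 : Finset (α × β) := univ.filter (fun g : α × β =>
    G.Adj (inl g.1) (inr g.2) ∧ G.Adj (inl u) (inr g.2) ∧ G.Adj (inl x) (inr g.2)) with hW1
  set W2 : Finset (α × β) := univ.filter (fun g : α × β =>
    G.Adj (inl g.1) (inr g.2) ∧ G.Adj (inl u) (inr g.2) ∧ ¬ G.Adj (inl x) (inr g.2) ∧
      G.Adj (inl g.1) (inr y)) with hW2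
  set W3 : Finset (α × β) := univ.filter (fun g : α × β =>
    G.Adj (inl g.1) (inr g.2) ∧ ¬ G.Adj (inl u) (inr g.2) ∧ G.Adj (inl g.1) (inr y)) with hW3
  have hcov : univ.filter ((Hgr G x y).Adj (u, y)) ⊆ W1 ∪ (W2 ∪ W3) := by
    intro g hg
    rw [Finset.mem_filter] at hg
    obtain ⟨-, -, -, ⟨hg1, hg2, -⟩, hlink⟩ := hg
    simp only [hW1, hW2, hW3, Finset.mem_union, Finset.mem_filter, Finset.mem_univ, true_and]
    by_cases h1 : G.Adj (inl u) (inr g.2)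
    · by_cases h2 : G.Adj (inl x) (inr g.2)
      · exact Or.inl ⟨hg1, h1, h2⟩
      · rcases hg2 with h3 | h3
        · exact Or.inr (Or.inl ⟨hg1, h1, h2, h3⟩)
        · exact absurd h3 h2
    · have h3 : G.Adj (inl g.1) (inr y) := by
        rcases hlink with h | h
        · exact h
        · exact absurd h h1
      exact Or.inr (Or.inr ⟨hg1, h1, h3⟩)
  have hW1c : W1.card ≤ t * b := by
    have hS : (univ.filter fun q : β => G.Adj (inl u) (inr q) ∧ G.Adj (inl x) (inr q)).card ≤ t :=
      Nat.lt_succ_iff.mp (codeg_alpha G hK hu)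
    calc W1.card ≤ (univ.filter fun q : β =>
        G.Adj (inl u) (inr q) ∧ G.Adj (inl x) (inr q)).card * b := by
          refine count_snd _ _ b (fun g hg => ?_) (fun q hq => ?_)
          · rw [Finset.mem_filter]; exact ⟨Finset.mem_univ _, hg.2⟩
          · calc (univ.filter fun p : α => G.Adj (inl p) (inr q) ∧ G.Adj (inl u) (inr q) ∧
                G.Adj (inl x) (inr q)).card
                ≤ (univ.filter fun p : α => G.Adj (inl p) (inr q)).card :=
                  Finset.card_le_card (fun p hp => by
                    rw [Finset.mem_filter] at hp ⊢; exact ⟨hp.1, hp.2.1⟩)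
              _ = b := deg_fst G hbip hreg q
      _ ≤ t * b := Nat.mul_le_mul_right b hS
  have hW2c : W2.card ≤ a * t := by
    have hS : (univ.filter fun q : β => G.Adj (inl u) (inr q) ∧ ¬ G.Adj (inl x) (inr q)).card
        ≤ a := by
      calc _ ≤ (univ.filter fun q : β => G.Adj (inl u) (inr q)).card :=
            Finset.card_le_card (fun q hq => by
              rw [Finset.mem_filter] at hq ⊢; exact ⟨hq.1, hq.2.1⟩)
        _ = a := deg_snd G hbip hreg u
    calc W2.card ≤ (univ.filter fun q : β =>
        G.Adj (inl u) (inr q) ∧ ¬ G.Adj (inl x) (inr q)).card * t := by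
          refine count_snd _ _ t (fun g hg => ?_) (fun q hq => ?_)
          · rw [Finset.mem_filter]; exact ⟨Finset.mem_univ _, hg.2.1, hg.2.2.1⟩
          · rw [Finset.mem_filter] at hq
            have hqy : q ≠ y := fun hc => hq.2.2 (hc ▸ hxy)
            calc (univ.filter fun p : α => G.Adj (inl p) (inr q) ∧ G.Adj (inl u) (inr q) ∧
                ¬ G.Adj (inl x) (inr q) ∧ G.Adj (inl p) (inr y)).card
                ≤ (univ.filter fun p : α => G.Adj (inl p) (inr q) ∧ G.Adj (inl p) (inr y)).card :=
                  Finset.card_le_card (fun p hp => by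
                    rw [Finset.mem_filter] at hp ⊢; exact ⟨hp.1, hp.2.1, hp.2.2.2.2⟩)
              _ ≤ t := Nat.lt_succ_iff.mp (codeg_beta G hK hqy)
      _ ≤ a * t := Nat.mul_le_mul_right t hS
  have hW3c : W3.card ≤ b * (a - 1) := by
    have hS : (univ.filter fun p : α => G.Adj (inl p) (inr y)).card = b :=
      deg_fst G hbip hreg y
    calc W3.card ≤ (univ.filter fun p : α => G.Adj (inl p) (inr y)).card * (a - 1) := by
          refine count_fst _ _ (a - 1) (fun g hg => ?_) (fun p hp => ?_)
          · rw [Finset.mem_filter]; exact ⟨Finset.mem_univ _, hg.2.2⟩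
          · rw [Finset.mem_filter] at hp
            have hmem : y ∈ univ.filter fun q : β => G.Adj (inl p) (inr q) := by
              rw [Finset.mem_filter]; exact ⟨Finset.mem_univ _, hp.2⟩
            calc (univ.filter fun q : β => G.Adj (inl p) (inr q) ∧ ¬ G.Adj (inl u) (inr q) ∧
                G.Adj (inl p) (inr y)).card
                ≤ ((univ.filter fun q : β => G.Adj (inl p) (inr q)).erase y).card := by
                  refine Finset.card_le_card (fun q hq => ?_)
                  rw [Finset.mem_filter] at hq
                  rw [Finset.mem_erase, Finset.mem_filter]
                  exact ⟨fun hc => hq.2.2.1 (hc ▸ huy), Finset.mem_univ _, hq.2.1⟩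
              _ = (univ.filter fun q : β => G.Adj (inl p) (inr q)).card - 1 :=
                  Finset.card_erase_of_mem hmem
              _ = a - 1 := by rw [deg_snd G hbip hreg p]
      _ = b * (a - 1) := by rw [hS]
  calc (univ.filter ((Hgr G x y).Adj (u, y))).card
      ≤ (W1 ∪ (W2 ∪ W3)).card := Finset.card_le_card hcov
    _ ≤ W1.card + (W2.card + W3.card) := by
        refine le_trans (Finset.card_union_le _ _) ?_
        exact Nat.add_le_add_left (Finset.card_union_le _ _) _
    _ ≤ t * b + (a * t + b * (a - 1)) :=
        Nat.add_le_add hW1c (Nat.add_le_add hW2c hW3c)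

lemma degFx {a b : ℕ} (hbip : BipartiteBetween G) (hreg : BiregularOn G a b)
    (x : α) (y : β) (w : β) :
    (Hgr G x y).degree (x, w) ≤ b * a + a * b := by
  classical
  rw [SimpleGraph.degree, SimpleGraph.neighborFinset_eq_filter]
  set V1 : Finset (α × β) := univ.filter (fun g : α × β =>
    G.Adj (inl g.1) (inr g.2) ∧ G.Adj (inl g.1) (inr y)) with hV1
  set V2 : Finset (α × β) := univ.filter (fun g : α × β =>
    G.Adj (inl g.1) (inr g.2) ∧ G.Adj (inl x) (inr g.2)) with hV2
  have hcov : univ.filter ((Hgr G x y).Adj (x, w)) ⊆ V1 ∪ V2 := by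
    intro g hg
    rw [Finset.mem_filter] at hg
    obtain ⟨-, -, -, ⟨hg1, hg2, -⟩, -⟩ := hg
    simp only [hV1, hV2, Finset.mem_union, Finset.mem_filter, Finset.mem_univ, true_and]
    exact hg2.imp (fun h => ⟨hg1, h⟩) (fun h => ⟨hg1, h⟩)
  have hV1c : V1.card ≤ b * a := by
    calc V1.card ≤ (univ.filter fun p : α => G.Adj (inl p) (inr y)).card * a := by
          refine count_fst _ _ a (fun g hg => ?_) (fun p hp => ?_)
          · rw [Finset.mem_filter]; exact ⟨Finset.mem_univ _, hg.2⟩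
          · calc (univ.filter fun q : β => G.Adj (inl p) (inr q) ∧ G.Adj (inl p) (inr y)).card
                ≤ (univ.filter fun q : β => G.Adj (inl p) (inr q)).card :=
                  Finset.card_le_card (fun q hq => by
                    rw [Finset.mem_filter] at hq ⊢; exact ⟨hq.1, hq.2.1⟩)
              _ = a := deg_snd G hbip hreg p
      _ = b * a := by rw [deg_fst G hbip hreg y]
  have hV2c : V2.card ≤ a * b := by
    calc V2.card ≤ (univ.filter fun q : β => G.Adj (inl x) (inr q)).card * b := by
          refine count_snd _ _ b (fun g hg => ?_) (fun q hq => ?_)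
          · rw [Finset.mem_filter]; exact ⟨Finset.mem_univ _, hg.2⟩
          · calc (univ.filter fun p : α => G.Adj (inl p) (inr q) ∧ G.Adj (inl x) (inr q)).card
                ≤ (univ.filter fun p : α => G.Adj (inl p) (inr q)).card :=
                  Finset.card_le_card (fun p hp => by
                    rw [Finset.mem_filter] at hp ⊢; exact ⟨hp.1, hp.2.1⟩)
              _ = b := deg_fst G hbip hreg q
      _ = a * b := by rw [deg_snd G hbip hreg x]
  calc (univ.filter ((Hgr G x y).Adj (x, w))).card
      ≤ (V1 ∪ V2).card := Finset.card_le_card hcov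
    _ ≤ V1.card + V2.card := Finset.card_union_le _ _
    _ ≤ b * a + a * b := Nat.add_le_add hV1c hV2c

lemma stepC {a t b : ℕ} (hbip : BipartiteBetween G) (hreg : BiregularOn G a b)
    (hK : K2Free G (t + 1)) (x : α) (y : β) (hxy : G.Adj (inl x) (inr y)) :
    ∑ f : α × β, (Hgr G x y).degree f ≤
      a * (b * a + a * b) + (b * (t * b + (a * t + b * (a - 1)))
        + (b * (a - 1) + (a - 1) * b) * (t * b + (a * t + (t * a + a * t)))) := by
  classical
  set D : Finset (α × β) := univ.filter (Pxy G x y) with hD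
  have hzero : ∀ f ∈ univ \ D, (Hgr G x y).degree f = 0 := by
    intro f hf
    rw [Finset.mem_sdiff, hD, Finset.mem_filter] at hf
    have hnp : ¬ Pxy G x y f := fun h => hf.2 ⟨Finset.mem_univ _, h⟩
    rw [SimpleGraph.degree, SimpleGraph.neighborFinset_eq_filter, Finset.card_eq_zero,
      Finset.eq_empty_iff_forall_notMem]
    intro g hg
    rw [Finset.mem_filter] at hg
    exact hnp hg.2.2.1
  have hsumD : ∑ f : α × β, (Hgr G x y).degree f = ∑ f ∈ D, (Hgr G x y).degree f := by
    refine (Finset.sum_subset (Finset.subset_univ D) fun f hf hfD => ?_).symm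
    exact hzero f (Finset.mem_sdiff.mpr ⟨hf, hfD⟩)
  set S1 : Finset (α × β) := D.filter (fun f => f.1 = x) with hS1def
  set D' : Finset (α × β) := D.filter (fun f => ¬ f.1 = x) with hD'def
  set S2 : Finset (α × β) := D'.filter (fun f => f.2 = y) with hS2def
  set S3 : Finset (α × β) := D'.filter (fun f => ¬ f.2 = y) with hS3def
  have hsplit : ∑ f ∈ D, (Hgr G x y).degree f =
      ∑ f ∈ S1, (Hgr G x y).degree f +
        (∑ f ∈ S2, (Hgr G x y).degree f + ∑ f ∈ S3, (Hgr G x y).degree f) := by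
    rw [← Finset.sum_filter_add_sum_filter_not D (fun f => f.1 = x),
      ← Finset.sum_filter_add_sum_filter_not D' (fun f => f.2 = y)]
  have hmemD : ∀ f ∈ D, Pxy G x y f := by
    intro f hf; rw [hD, Finset.mem_filter] at hf; exact hf.2
  -- class cardinalities
  have hS1card : S1.card ≤ a := by
    rw [← deg_snd G hbip hreg x]
    refine Finset.card_le_card_of_injOn Prod.snd (fun f hf => ?_) ?_
    · rw [Finset.mem_coe, hS1def, Finset.mem_filter] at hf
      obtain ⟨hfD, hfx⟩ := hf
      have hP := hmemD f hfD
      rw [Finset.mem_coe, Finset.mem_filter]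
      exact ⟨Finset.mem_univ _, by rw [← hfx]; exact hP.1⟩
    · intro f hf g hg hfg
      simp only [hS1def, Finset.coe_filter, Set.mem_setOf_eq] at hf hg
      exact Prod.ext (hf.2.trans hg.2.symm) hfg
  have hS2card : S2.card ≤ b := by
    rw [← deg_fst G hbip hreg y]
    refine Finset.card_le_card_of_injOn Prod.fst (fun f hf => ?_) ?_
    · rw [Finset.mem_coe, hS2def, Finset.mem_filter, hD'def, Finset.mem_filter] at hf
      obtain ⟨⟨hfD, -⟩, hfy⟩ := hf
      have hP := hmemD f hfD
      rw [Finset.mem_coe, Finset.mem_filter]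
      exact ⟨Finset.mem_univ _, by rw [← hfy]; exact hP.1⟩
    · intro f hf g hg hfg
      simp only [hS2def, Finset.coe_filter, Set.mem_setOf_eq] at hf hg
      exact Prod.ext hfg (hf.2.trans hg.2.symm)
  have hS3card : S3.card ≤ b * (a - 1) + (a - 1) * b := by
    set Fg1 : Finset (α × β) := univ.filter (fun f : α × β =>
      G.Adj (inl f.1) (inr f.2) ∧ G.Adj (inl f.1) (inr y) ∧ f.2 ≠ y) with hFg1
    set Fg2 : Finset (α × β) := univ.filter (fun f : α × β =>
      G.Adj (inl f.1) (inr f.2) ∧ G.Adj (inl x) (inr f.2) ∧ f.2 ≠ y) with hFg2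
    have hcov : S3 ⊆ Fg1 ∪ Fg2 := by
      intro f hf
      rw [hS3def, Finset.mem_filter, hD'def, Finset.mem_filter] at hf
      obtain ⟨⟨hfD, -⟩, hfy⟩ := hf
      obtain ⟨hadj, hdisj, -⟩ := hmemD f hfD
      simp only [hFg1, hFg2, Finset.mem_union, Finset.mem_filter, Finset.mem_univ, true_and]
      exact hdisj.imp (fun h => ⟨hadj, h, hfy⟩) (fun h => ⟨hadj, h, hfy⟩)
    have hFg1c : Fg1.card ≤ b * (a - 1) := by
      calc Fg1.card ≤ (univ.filter fun p : α => G.Adj (inl p) (inr y)).card * (a - 1) := by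
            refine count_fst _ _ (a - 1) (fun f hf => ?_) (fun p hp => ?_)
            · rw [Finset.mem_filter]; exact ⟨Finset.mem_univ _, hf.2.1⟩
            · rw [Finset.mem_filter] at hp
              have hmem : y ∈ univ.filter fun q : β => G.Adj (inl p) (inr q) := by
                rw [Finset.mem_filter]; exact ⟨Finset.mem_univ _, hp.2⟩
              calc (univ.filter fun q : β => G.Adj (inl p) (inr q) ∧ G.Adj (inl p) (inr y) ∧
                  q ≠ y).card
                  ≤ ((univ.filter fun q : β => G.Adj (inl p) (inr q)).erase y).card := by
                    refine Finset.card_le_card (fun q hq => ?_)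
                    rw [Finset.mem_filter] at hq
                    rw [Finset.mem_erase, Finset.mem_filter]
                    exact ⟨hq.2.2.2, Finset.mem_univ _, hq.2.1⟩
                _ = (univ.filter fun q : β => G.Adj (inl p) (inr q)).card - 1 :=
                    Finset.card_erase_of_mem hmem
                _ = a - 1 := by rw [deg_snd G hbip hreg p]
        _ = b * (a - 1) := by rw [deg_fst G hbip hreg y]
    have hFg2c : Fg2.card ≤ (a - 1) * b := by
      have hyA : y ∈ univ.filter fun q : β => G.Adj (inl x) (inr q) := by
        rw [Finset.mem_filter]; exact ⟨Finset.mem_univ _, hxy⟩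
      calc Fg2.card
          ≤ ((univ.filter fun q : β => G.Adj (inl x) (inr q)).erase y).card * b := by
            refine count_snd _ _ b (fun f hf => ?_) (fun q hq => ?_)
            · rw [Finset.mem_erase, Finset.mem_filter]
              exact ⟨hf.2.2, Finset.mem_univ _, hf.2.1⟩
            · calc (univ.filter fun p : α => G.Adj (inl p) (inr q) ∧ G.Adj (inl x) (inr q) ∧
                  q ≠ y).card
                  ≤ (univ.filter fun p : α => G.Adj (inl p) (inr q)).card :=
                    Finset.card_le_card (fun p hp => by
                      rw [Finset.mem_filter] at hp ⊢; exact ⟨hp.1, hp.2.1⟩)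
                _ = b := deg_fst G hbip hreg q
          _ = (a - 1) * b := by
            rw [Finset.card_erase_of_mem hyA, deg_snd G hbip hreg x]
    calc S3.card ≤ (Fg1 ∪ Fg2).card := Finset.card_le_card hcov
      _ ≤ Fg1.card + Fg2.card := Finset.card_union_le _ _
      _ ≤ b * (a - 1) + (a - 1) * b := Nat.add_le_add hFg1c hFg2c
  -- per class sums
  have hsum1 : ∑ f ∈ S1, (Hgr G x y).degree f ≤ a * (b * a + a * b) := by
    have hb : ∀ f ∈ S1, (Hgr G x y).degree f ≤ b * a + a * b := by
      intro f hf
      rw [hS1def, Finset.mem_filter] at hf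
      have : f = (x, f.2) := Prod.ext hf.2 rfl
      rw [this]
      exact degFx G hbip hreg x y f.2
    calc ∑ f ∈ S1, (Hgr G x y).degree f ≤ S1.card • (b * a + a * b) :=
        Finset.sum_le_card_nsmul _ _ _ hb
      _ = S1.card * (b * a + a * b) := by rw [smul_eq_mul]
      _ ≤ a * (b * a + a * b) := Nat.mul_le_mul_right _ hS1card
  have hsum2 : ∑ f ∈ S2, (Hgr G x y).degree f ≤ b * (t * b + (a * t + b * (a - 1))) := by
    have hb : ∀ f ∈ S2, (Hgr G x y).degree f ≤ t * b + (a * t + b * (a - 1)) := by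
      intro f hf
      rw [hS2def, Finset.mem_filter, hD'def, Finset.mem_filter] at hf
      obtain ⟨⟨hfD, hfx⟩, hfy⟩ := hf
      have hP := hmemD f hfD
      have hefy : f = (f.1, y) := Prod.ext rfl hfy
      have huy : G.Adj (inl f.1) (inr y) := by rw [← hfy]; exact hP.1
      rw [hefy]
      exact degFy G hbip hreg hK x y hxy f.1 huy hfx
    calc ∑ f ∈ S2, (Hgr G x y).degree f ≤ S2.card • (t * b + (a * t + b * (a - 1))) :=
        Finset.sum_le_card_nsmul _ _ _ hb
      _ = S2.card * _ := by rw [smul_eq_mul]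
      _ ≤ b * (t * b + (a * t + b * (a - 1))) := Nat.mul_le_mul_right _ hS2card
  have hsum3 : ∑ f ∈ S3, (Hgr G x y).degree f ≤
      (b * (a - 1) + (a - 1) * b) * (t * b + (a * t + (t * a + a * t))) := by
    have hb : ∀ f ∈ S3, (Hgr G x y).degree f ≤ t * b + (a * t + (t * a + a * t)) := by
      intro f hf
      rw [hS3def, Finset.mem_filter, hD'def, Finset.mem_filter] at hf
      obtain ⟨⟨hfD, hfx⟩, hfy⟩ := hf
      have hP := hmemD f hfD
      have : f = (f.1, f.2) := rfl
      rw [this]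
      exact degFg G hbip hreg hK x y hxy f.1 f.2 hP.1 hfx hfy
    calc ∑ f ∈ S3, (Hgr G x y).degree f ≤ S3.card • (t * b + (a * t + (t * a + a * t))) :=
        Finset.sum_le_card_nsmul _ _ _ hb
      _ = S3.card * _ := by rw [smul_eq_mul]
      _ ≤ (b * (a - 1) + (a - 1) * b) * (t * b + (a * t + (t * a + a * t))) :=
          Nat.mul_le_mul_right _ hS3card
  rw [hsumD, hsplit]
  exact Nat.add_le_add hsum1 (Nat.add_le_add hsum2 hsum3)

lemma stepA (hbip : BipartiteBetween G) (x : α) (y : β) :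
    ({e ∈ (lineSquare G).edgeSet | ∀ z ∈ e, z ∈ (lineSquare G).neighborSet (enc (x, y))}).ncard
      ≤ (Hgr G x y).edgeFinset.card := by
  have hsub : {e ∈ (lineSquare G).edgeSet | ∀ z ∈ e, z ∈ (lineSquare G).neighborSet (enc (x, y))}
      ⊆ Sym2.map enc '' (Hgr G x y).edgeSet := by
    intro e he
    obtain ⟨he1, he2⟩ := he
    induction e using Sym2.ind with
    | _ E₁ E₂ =>
      obtain ⟨hE₁, hE₂, hS⟩ : (lineSquare G).Adj E₁ E₂ := he1
      obtain ⟨f₁, hf₁, rfl⟩ := crossRep G hbip hE₁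
      obtain ⟨f₂, hf₂, rfl⟩ := crossRep G hbip hE₂
      have hn₁ : (lineSquare G).Adj (enc (x, y)) (enc f₁) := by
        rw [← SimpleGraph.mem_neighborSet]
        exact he2 _ (Sym2.mem_mk_left _ _)
      have hn₂ : (lineSquare G).Adj (enc (x, y)) (enc f₂) := by
        rw [← SimpleGraph.mem_neighborSet]
        exact he2 _ (Sym2.mem_mk_right _ _)
      have hvE : G.Adj (inl x) (inr y) :=
        (SimpleGraph.mem_edgeSet G).mp (show s(inl x, inr y) ∈ G.edgeSet from hn₁.1)
      have hP : ∀ f : α × β, G.Adj (inl f.1) (inr f.2) →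
          (lineSquare G).Adj (enc (x, y)) (enc f) → Pxy G x y f := by
        rintro ⟨p, q⟩ hpq ⟨-, -, hSt⟩
        refine ⟨hpq, strong_link G hbip hvE hpq hSt, ?_⟩
        intro hc
        exact hSt.1 (by rw [hc])
      refine ⟨s(f₁, f₂), ?_, by rw [Sym2.map_pair_eq]⟩
      refine (SimpleGraph.mem_edgeSet (Hgr G x y)).mpr ?_
      refine ⟨fun hc => hS.1 (by rw [hc]), hP f₁ hf₁ hn₁, hP f₂ hf₂ hn₂, ?_⟩
      obtain ⟨p₁, q₁⟩ := f₁
      obtain ⟨p₂, q₂⟩ := f₂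
      exact (strong_link G hbip hf₁ hf₂ hS).symm.imp id id |>.symm
  calc ({e ∈ (lineSquare G).edgeSet | ∀ z ∈ e, z ∈ (lineSquare G).neighborSet (enc (x, y))}).ncard
      ≤ (Sym2.map enc '' (Hgr G x y).edgeSet).ncard :=
        Set.ncard_le_ncard hsub (Set.toFinite _)
    _ ≤ (Hgr G x y).edgeSet.ncard := Set.ncard_image_le (Set.toFinite _)
    _ = (Hgr G x y).edgeFinset.card := by
        rw [← SimpleGraph.coe_edgeFinset, Set.ncard_coe_finset]

lemma stepD {a t b : ℕ} (hbip : BipartiteBetween G) (hreg : BiregularOn G a b)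
    (hK : K2Free G (t + 1)) (x : α) (y : β) (hxy : G.Adj (inl x) (inr y)) :
    b * a - 1 + (a - 1) * (b - t) ≤ maxDeg (lineSquare G) := by
  classical
  set E1 : Finset (α × β) := univ.filter (fun f : α × β =>
    G.Adj (inl f.1) (inr f.2) ∧ G.Adj (inl f.1) (inr y)) with hE1
  set E2 : Finset (α × β) := univ.filter (fun f : α × β =>
    G.Adj (inl f.1) (inr f.2) ∧ G.Adj (inl x) (inr f.2) ∧ f.2 ≠ y ∧
      ¬ G.Adj (inl f.1) (inr y)) with hE2
  have hE1c : b * a ≤ E1.card := by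
    rw [← deg_fst G hbip hreg y]
    refine count_fst_ge _ _ a (fun p hp => ?_)
    rw [Finset.mem_filter] at hp
    rw [← deg_snd G hbip hreg p]
    refine Finset.card_le_card (fun q hq => ?_)
    rw [Finset.mem_filter] at hq ⊢
    exact ⟨hq.1, hq.2, hp.2⟩
  have hE1'c : b * a - 1 ≤ (E1.erase (x, y)).card := by
    calc b * a - 1 ≤ E1.card - 1 := Nat.sub_le_sub_right hE1c 1
      _ ≤ (E1.erase (x, y)).card := Finset.pred_card_le_card_erase
  have hE2c : (a - 1) * (b - t) ≤ E2.card := by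
    have hyA : y ∈ univ.filter fun q : β => G.Adj (inl x) (inr q) := by
      rw [Finset.mem_filter]; exact ⟨Finset.mem_univ _, hxy⟩
    have hcard : ((univ.filter fun q : β => G.Adj (inl x) (inr q)).erase y).card = a - 1 := by
      rw [Finset.card_erase_of_mem hyA, deg_snd G hbip hreg x]
    rw [← hcard]
    refine count_snd_ge _ _ (b - t) (fun q hq => ?_)
    rw [Finset.mem_erase, Finset.mem_filter] at hq
    obtain ⟨hqy, -, hxq⟩ := hq
    have hsplit := Finset.card_filter_add_card_filter_not
      (s := univ.filter fun p : α => G.Adj (inl p) (inr q))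
      (p := fun p => G.Adj (inl p) (inr y))
    rw [Finset.filter_filter, Finset.filter_filter, deg_fst G hbip hreg q] at hsplit
    have hpos : (univ.filter fun p : α =>
        G.Adj (inl p) (inr q) ∧ G.Adj (inl p) (inr y)).card ≤ t :=
      Nat.lt_succ_iff.mp (codeg_beta G hK hqy)
    have hneg : b - t ≤ (univ.filter fun p : α =>
        G.Adj (inl p) (inr q) ∧ ¬ G.Adj (inl p) (inr y)).card := by omega
    refine le_trans hneg (Finset.card_le_card fun p hp => ?_)
    rw [Finset.mem_filter] at hp ⊢
    exact ⟨hp.1, hp.2.1, hxq, hqy, hp.2.2⟩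
  have hdisj : Disjoint (E1.erase (x, y)) E2 := by
    rw [Finset.disjoint_left]
    intro f hf1 hf2
    rw [Finset.mem_erase, hE1, Finset.mem_filter] at hf1
    rw [hE2, Finset.mem_filter] at hf2
    exact hf2.2.2.2.2 hf1.2.2.2
  have hsub : enc '' ↑(E1.erase (x, y) ∪ E2) ⊆
      (lineSquare G).neighborSet (enc (x, y)) := by
    rintro e ⟨f, hf, rfl⟩
    rw [Finset.coe_union, Set.mem_union] at hf
    have hxyE : enc (x, y) ∈ G.edgeSet := (SimpleGraph.mem_edgeSet G).mpr hxy
    rw [SimpleGraph.mem_neighborSet]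
    rcases hf with hf | hf
    · rw [Finset.mem_coe, Finset.mem_erase, hE1, Finset.mem_filter] at hf
      obtain ⟨hne, -, hadj, hfy⟩ := hf
      refine ⟨hxyE, (SimpleGraph.mem_edgeSet G).mpr hadj, fun h => hne (enc_inj h).symm,
        inr y, inl f.1, Sym2.mem_mk_right _ _, Sym2.mem_mk_left _ _, Or.inr hfy.symm⟩
    · rw [Finset.mem_coe, hE2, Finset.mem_filter] at hf
      obtain ⟨-, hadj, hxf, hfy, -⟩ := hf
      have hne : f ≠ (x, y) := fun hc => hfy (congrArg Prod.snd hc)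
      refine ⟨hxyE, (SimpleGraph.mem_edgeSet G).mpr hadj, fun h => hne (enc_inj h).symm,
        inl x, inr f.2, Sym2.mem_mk_left _ _, Sym2.mem_mk_right _ _, Or.inr hxf⟩
  calc b * a - 1 + (a - 1) * (b - t)
      ≤ (E1.erase (x, y)).card + E2.card := Nat.add_le_add hE1'c hE2c
    _ = (E1.erase (x, y) ∪ E2).card := (Finset.card_union_of_disjoint hdisj).symm
    _ = (enc '' ↑(E1.erase (x, y) ∪ E2)).ncard := by
        rw [Set.ncard_image_of_injective _ enc_inj, Set.ncard_coe_finset]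
    _ ≤ ((lineSquare G).neighborSet (enc (x, y))).ncard :=
        Set.ncard_le_ncard hsub (Set.toFinite _)
    _ ≤ maxDeg (lineSquare G) := by
        exact Finset.le_sup (f := fun v => ((lineSquare G).neighborSet v).ncard)
          (Finset.mem_univ (enc (x, y)))

end S1

set_option maxHeartbeats 1000000 in
theorem arith (a t : ℕ) (ht : 1 ≤ t) (hta : t < a) (b : ℕ) (hb : 100 * a^4 * t^2 + 2 ≤ b)
    (ε : ℝ) (hε : 0 < ε) (Tc N Δ : ℝ)
    (hTcN : 2 * Tc ≤ N)
    (hN : N = (a:ℝ) * (b*a + a*b) + ((b:ℝ) * (t*b + (a*t + b*(a-1)))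
      + ((b:ℝ)*(a-1) + (a-1)*b) * (t*b + (a*t + (t*a + a*t)))))
    (hΔ : (b:ℝ)*a - 1 + ((a:ℝ)-1)*(b-t) ≤ Δ) :
    Tc ≤ ((4*(a:ℝ)-3)*t/(2*(a:ℝ)-1)^2 + ε) * (Δ * (Δ - 1) / 2) := by
  have ha2 : (2:ℝ) ≤ a := by exact_mod_cast (by omega : 2 ≤ a)
  have ht1 : (1:ℝ) ≤ t := by exact_mod_cast ht
  have hat : (t:ℝ) + 1 ≤ a := by exact_mod_cast hta
  have hbR : 100*(a:ℝ)^4*t^2 + 2 ≤ b := by exact_mod_cast hb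
  set A := (a:ℝ)
  set T := (t:ℝ)
  set Bb := (b:ℝ)
  have hA0 : (0:ℝ) < A := by linarith
  have hT0 : (0:ℝ) < T := by linarith
  have haux : (0:ℝ) ≤ A^4*T^2 := by positivity
  have hBb : (2:ℝ) ≤ Bb := by linarith
  have hA2 : (4:ℝ) ≤ A^2 := by nlinarith
  have hA3 : (8:ℝ) ≤ A^3 := by nlinarith
  have hT2 : T ≤ T^2 := by nlinarith
  have hAT2 : (2:ℝ) ≤ A*T := by nlinarith
  set K : ℝ := (A-1)*T + 1 with hK
  have hK1 : (1:ℝ) ≤ K := by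
    rw [hK]
    have := mul_nonneg (by linarith : (0:ℝ) ≤ A-1) (by linarith : (0:ℝ) ≤ T)
    linarith
  set D0 : ℝ := 2*A*Bb - Bb - K with hD0
  have hD0le : D0 ≤ Δ := by
    rw [hD0, hK]
    have hiden : 2*A*Bb - Bb - ((A-1)*T+1) = Bb*A - 1 + (A-1)*(Bb-T) := by ring
    linarith [hΔ]
  have hKaux : K ≤ A^4*T^2 := by
    have h8 : (8:ℝ) ≤ A^3*T := by nlinarith
    have h1 : (A*T)*8 ≤ (A*T)*(A^3*T) := by
      apply mul_le_mul_of_nonneg_left h8 (by positivity)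
    have heq : (A*T)*(A^3*T) = A^4*T^2 := by ring
    have h2 : K ≤ A*T + 1 := by
      rw [hK]
      have hiden : A*T - (A-1)*T = T := by ring
      linarith
    nlinarith [h1, heq, h2, hAT2]
  have hKBb : K ≤ Bb := by linarith
  have hD01 : (1:ℝ) ≤ D0 := by
    rw [hD0]
    have h1 : (0:ℝ) ≤ (2*A-4)*Bb := mul_nonneg (by linarith) (by linarith)
    have hiden : 2*A*Bb - Bb - K = (2*A-4)*Bb + 3*Bb - K := by ring
    linarith
  have hΔ1 : (1:ℝ) ≤ Δ := le_trans hD01 hD0le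
  set M : ℝ := 2*A*T + A - T - 1 with hM
  set L : ℝ := 2*A^2 + A*T + 6*A*(A-1)*T with hL
  have hNr : N = M*Bb^2 + L*Bb := by rw [hN, hM, hL]; ring
  have hLb : L ≤ 9*A^2*T := by
    have hiden : 9*A^2*T - L = 2*A^2*(T-1) + A^2*T + 5*A*T := by rw [hL]; ring
    have h1 : (0:ℝ) ≤ 2*A^2*(T-1) := by
      apply mul_nonneg (by positivity) (by linarith)
    have h2 : (0:ℝ) ≤ A^2*T := by positivity
    have h3 : (0:ℝ) ≤ A*T := by positivity
    linarith
  have h2K : (4*A-3)*T*(2*K+1) ≤ 12*A^2*T^2 := by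
    have hiden : 12*A^2*T^2 - (4*A-3)*T*(2*K+1) =
        (4*A^2+14*A-6)*(T^2-T) + (4*A^2+2*A+3)*T := by rw [hK]; ring
    have h1 : (0:ℝ) ≤ (4*A^2+14*A-6)*(T^2-T) :=
      mul_nonneg (by nlinarith) (by linarith)
    have h2 : (0:ℝ) ≤ (4*A^2+2*A+3)*T := by positivity
    linarith
  have h9 : 9*A^2*T ≤ 9*A^4*T^2 := by
    have hiden : 9*A^4*T^2 - 9*A^2*T = 9*(A^2*T)*(A^2*T - 1) := by ring
    have h1 : (4:ℝ) ≤ A^2*T := by nlinarith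
    have h2 : (0:ℝ) ≤ 9*(A^2*T)*(A^2*T-1) :=
      mul_nonneg (by positivity) (by linarith)
    linarith
  have h12 : 12*A^2*T^2 ≤ 12*A^4*T^2 := by
    have hiden : 12*A^4*T^2 - 12*A^2*T^2 = 12*T^2*(A^2*(A^2-1)) := by ring
    have h1 : (0:ℝ) ≤ 12*T^2*(A^2*(A^2-1)) := by
      apply mul_nonneg (by positivity)
      apply mul_nonneg (by positivity) (by nlinarith)
    linarith
  have h4 : L + (4*A-3)*T*(2*K+1) ≤ Bb := by nlinarith
  have h1p : (1:ℝ) ≤ (A-1)*(2*T-1) := by nlinarith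
  have h5a : (4*A-3)*T*(2*K+1) ≤ (A-1)*(2*T-1)*Bb - L := by
    have h2 : (0:ℝ) ≤ ((A-1)*(2*T-1) - 1)*Bb := mul_nonneg (by linarith) (by linarith)
    have hiden : (A-1)*(2*T-1)*Bb - Bb = ((A-1)*(2*T-1)-1)*Bb := by ring
    linarith
  have h2KK : (0:ℝ) ≤ (4*A-3)*T*(2*K+1) :=
    mul_nonneg (mul_nonneg (by linarith) (by linarith)) (by linarith)
  have hY0 : (0:ℝ) ≤ (A-1)*(2*T-1)*Bb - L := le_trans h2KK h5a
  have h5b : (2*A-1)*((4*A-3)*T*(2*K+1)) ≤ (2*A-1)^2*((A-1)*(2*T-1)*Bb - L) := by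
    have s1 : (2*A-1)*((4*A-3)*T*(2*K+1)) ≤ (2*A-1)*((A-1)*(2*T-1)*Bb - L) :=
      mul_le_mul_of_nonneg_left h5a (by linarith)
    have s2 : (2*A-1)*((A-1)*(2*T-1)*Bb - L) ≤ (2*A-1)^2*((A-1)*(2*T-1)*Bb - L) := by
      have h3 : (0:ℝ) ≤ ((2*A-1)*(2*A-2))*((A-1)*(2*T-1)*Bb - L) :=
        mul_nonneg (mul_nonneg (by linarith) (by linarith)) hY0
      have hiden : (2*A-1)^2*((A-1)*(2*T-1)*Bb - L) - (2*A-1)*((A-1)*(2*T-1)*Bb - L)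
          = ((2*A-1)*(2*A-2))*((A-1)*(2*T-1)*Bb - L) := by ring
      linarith
    exact le_trans s1 s2
  have h5c : (2*A-1)*((4*A-3)*T*(2*K+1))*Bb ≤ (2*A-1)^2*((A-1)*(2*T-1)*Bb - L)*Bb :=
    mul_le_mul_of_nonneg_right h5b (by linarith)
  have hZ : (0:ℝ) ≤ (4*A-3)*T*(K^2+K) :=
    mul_nonneg (mul_nonneg (by linarith) (by linarith)) (by nlinarith [sq_nonneg K])
  have hid : (4*A-3)*T*(D0*(D0-1)) - (2*A-1)^2*(M*Bb^2 + L*Bb) =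
      (2*A-1)^2*((A-1)*(2*T-1)*Bb - L)*Bb - (2*A-1)*((4*A-3)*T*(2*K+1))*Bb
        + (4*A-3)*T*(K^2+K) := by
    rw [hD0, hM, hL, hK]; ring
  have main_poly : (2*A-1)^2 * N ≤ (4*A-3)*T*(D0*(D0-1)) := by
    rw [hNr]; linarith
  have hpos : (0:ℝ) < (2*A-1)^2 := pow_pos (by linarith) 2
  have hc : (0:ℝ) ≤ (4*A-3)*T/(2*A-1)^2 := by
    apply div_nonneg (mul_nonneg (by linarith) (by linarith)) (by positivity)
  have hquad : D0*(D0-1) ≤ Δ*(Δ-1) := by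
    have hiden : Δ*(Δ-1) - D0*(D0-1) = (Δ-D0)*(Δ+D0-1) := by ring
    have := mul_nonneg (sub_nonneg.mpr hD0le) (by linarith : (0:ℝ) ≤ Δ+D0-1)
    linarith
  have hNle : N ≤ (4*A-3)*T/(2*A-1)^2 * (D0*(D0-1)) := by
    rw [div_mul_eq_mul_div, le_div_iff₀ hpos]
    have hcomm : N*(2*A-1)^2 = (2*A-1)^2*N := by ring
    linarith [main_poly]
  have hW : (0:ℝ) ≤ Δ*(Δ-1) := mul_nonneg (by linarith) (by linarith)
  have h6 : N ≤ ((4*A-3)*T/(2*A-1)^2 + ε) * (Δ*(Δ-1)) := by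
    have hmul := mul_le_mul_of_nonneg_left hquad hc
    have hεW := mul_nonneg (le_of_lt hε) hW
    have hiden : ((4*A-3)*T/(2*A-1)^2 + ε) * (Δ*(Δ-1)) =
        (4*A-3)*T/(2*A-1)^2 * (Δ*(Δ-1)) + ε*(Δ*(Δ-1)) := by ring
    linarith
  linarith


lemma key {α β : Type} [Fintype α] [Fintype β] [DecidableEq α] [DecidableEq β]
    (G : SimpleGraph (α ⊕ β)) {a t b : ℕ} (ht : 1 ≤ t) (hta : t < a)
    (hb : 100 * a ^ 4 * t ^ 2 + 2 ≤ b)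
    (hbip : BipartiteBetween G) (hreg : BiregularOn G a b) (hK : K2Free G (t + 1))
    (x : α) (y : β) (hxy : G.Adj (Sum.inl x) (Sum.inr y)) (ε : ℝ) (hε : 0 < ε) :
    (({e ∈ (lineSquare G).edgeSet |
        ∀ z ∈ e, z ∈ (lineSquare G).neighborSet (enc (x, y))}).ncard : ℝ)
      ≤ ((4 * (a : ℝ) - 3) * t / (2 * (a : ℝ) - 1) ^ 2 + ε)
          * ((maxDeg (lineSquare G)).choose 2) := by
  classical
  have hT := stepA G hbip x y
  have hsum := SimpleGraph.sum_degrees_eq_twice_card_edges (Hgr G x y)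
  have hC := stepC G hbip hreg hK x y hxy
  have hDnat := stepD G hbip hreg hK x y hxy
  have ha1 : 1 ≤ a := by omega
  have hb2 : 2 ≤ b := le_trans (Nat.le_add_left 2 _) hb
  have htb : t ≤ b := by
    have h1 : t ≤ t ^ 2 := Nat.le_self_pow two_ne_zero t
    have h2 : t ^ 2 ≤ 100 * a ^ 4 * t ^ 2 := by
      have hpos : 0 < 100 * a ^ 4 := by
        have : 0 < a := by omega
        positivity
      calc t ^ 2 = 1 * t ^ 2 := (one_mul _).symm
        _ ≤ 100 * a ^ 4 * t ^ 2 := Nat.mul_le_mul_right _ hpos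
    omega
  have h1ba : 1 ≤ b * a := by
    calc 1 = 1 * 1 := rfl
    _ ≤ b * a := Nat.mul_le_mul (by omega) (by omega)
  have h2T : 2 * ({e ∈ (lineSquare G).edgeSet |
      ∀ z ∈ e, z ∈ (lineSquare G).neighborSet (enc (x, y))}).ncard ≤
      a * (b * a + a * b) + (b * (t * b + (a * t + b * (a - 1)))
        + (b * (a - 1) + (a - 1) * b) * (t * b + (a * t + (t * a + a * t)))) := by
    calc 2 * ({e ∈ (lineSquare G).edgeSet |
        ∀ z ∈ e, z ∈ (lineSquare G).neighborSet (enc (x, y))}).ncard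
        ≤ 2 * (Hgr G x y).edgeFinset.card := Nat.mul_le_mul_left 2 hT
      _ = ∑ f : α × β, (Hgr G x y).degree f := hsum.symm
      _ ≤ _ := hC
  -- cast to ℝ
  have hc1 : ((a - 1 : ℕ) : ℝ) = (a : ℝ) - 1 := by
    rw [Nat.cast_sub ha1, Nat.cast_one]
  have hc2 : ((b - t : ℕ) : ℝ) = (b : ℝ) - t := by
    rw [Nat.cast_sub htb]
  have h2TR : 2 * (({e ∈ (lineSquare G).edgeSet |
      ∀ z ∈ e, z ∈ (lineSquare G).neighborSet (enc (x, y))}).ncard : ℝ) ≤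
      (a : ℝ) * (b * a + a * b) + ((b : ℝ) * (t * b + (a * t + b * ((a : ℝ) - 1)))
        + ((b : ℝ) * ((a : ℝ) - 1) + ((a : ℝ) - 1) * b)
            * (t * b + (a * t + (t * a + a * t)))) := by
    have := (Nat.cast_le (α := ℝ)).mpr h2T
    push_cast [hc1] at this
    convert this using 2 <;> push_cast <;> ring
  have hDR : (b : ℝ) * a - 1 + ((a : ℝ) - 1) * ((b : ℝ) - t) ≤
      (maxDeg (lineSquare G) : ℝ) := by
    have := (Nat.cast_le (α := ℝ)).mpr hDnat
    push_cast [hc1, hc2, Nat.cast_sub h1ba] at this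
    convert this using 2 <;> push_cast <;> ring
  rw [Nat.cast_choose_two]
  exact arith a t ht hta b hb ε hε _ _ _ h2TR rfl hDR
theorem statement_5 (a t : ℕ) (ht : 1 ≤ t) (hta : t < a) :
    ∀ ε : ℝ, 0 < ε → ∃ B : ℕ, ∀ b : ℕ, B ≤ b →
      ∀ (α β : Type) [Fintype α] [Fintype β] [DecidableEq α] [DecidableEq β]
        (G : SimpleGraph (α ⊕ β)),
        BipartiteBetween G → BiregularOn G a b → K2Free G (t + 1) →
        IsSparse (lineSquare G)
          (1 - (4 * (a : ℝ) - 3) * t / (2 * (a : ℝ) - 1) ^ 2 - ε) := by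
  intro ε hε
  refine ⟨100 * a ^ 4 * t ^ 2 + 2, fun b hb α β _ _ _ _ G hbip hreg hK => ?_⟩
  unfold IsSparse
  intro v
  have hco : (1 : ℝ) - (1 - (4 * (a : ℝ) - 3) * t / (2 * (a : ℝ) - 1) ^ 2 - ε)
      = (4 * (a : ℝ) - 3) * t / (2 * (a : ℝ) - 1) ^ 2 + ε := by ring
  rw [hco]
  by_cases hv : v ∈ G.edgeSet
  · obtain ⟨⟨x, y⟩, hxy, rfl⟩ := crossRep G hbip hv
    exact key G ht hta hb hbip hreg hK x y hxy ε hε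
  · have hempty : {e ∈ (lineSquare G).edgeSet |
        ∀ z ∈ e, z ∈ (lineSquare G).neighborSet v} = ∅ := by
      refine Set.eq_empty_iff_forall_notMem.mpr fun e he => ?_
      obtain ⟨he1, hall⟩ := he
      have hz := hall _ (Sym2.out_fst_mem e)
      rw [SimpleGraph.mem_neighborSet] at hz
      exact hv hz.1
    rw [hempty]
    simp only [Set.ncard_empty, Nat.cast_zero]
    have ha2 : (2 : ℝ) ≤ (a : ℝ) := by exact_mod_cast (by omega : 2 ≤ a)
    apply mul_nonneg
    · have h1 : (0 : ℝ) ≤ (4 * (a : ℝ) - 3) * t / (2 * (a : ℝ) - 1) ^ 2 := by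
        apply div_nonneg (mul_nonneg (by linarith) (by positivity)) (by positivity)
      linarith
    · positivity
end

section
/- If H=(X,S) is an α-acyclic linear hypergraph and H'=(X',S') is a subhypergraph of H (that is, X'⊆X and S'⊆S), then H' is also an α-acyclic linear hypergraph. -/
structure FinHypergraph (V : Type*) where
  verts : Finset V
  edges : Finset (Finset V)
  edge_sub : ∀ s ∈ edges, s ⊆ verts
  edge_nonempty : ∀ s ∈ edges, s.Nonempty

namespace FinHypergraph

variable {V : Type*} [DecidableEq V]

/-- The degree of a vertex: the number of edges containing it. -/
def degree (H : FinHypergraph V) (x : V) : ℕ :=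
  (H.edges.filter fun s => x ∈ s).card

/-- Δ(H): the maximum degree. -/
def maxDegree (H : FinHypergraph V) : ℕ :=
  H.verts.sup H.degree

/-- r(H): the maximum cardinality of an edge. -/
def rank (H : FinHypergraph V) : ℕ :=
  H.edges.sup Finset.card

/-- An incidence of H: a pair (x, s) with s an edge and x ∈ s. -/
def IsIncidence (H : FinHypergraph V) (p : V × Finset V) : Prop :=
  p.2 ∈ H.edges ∧ p.1 ∈ p.2

/-- Two (distinct) incidences (x,s), (x',s') are adjacent if x = x', or {x,x'} ⊆ s,
or {x,x'} ⊆ s'. -/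
def IncAdj (p q : V × Finset V) : Prop :=
  p ≠ q ∧ (p.1 = q.1 ∨ ({p.1, q.1} : Finset V) ⊆ p.2 ∨ ({p.1, q.1} : Finset V) ⊆ q.2)

/-- A proper incidence k-coloring: adjacent incidences get distinct colors from {0, ..., k-1}. -/
def HasIncidenceColoring (H : FinHypergraph V) (k : ℕ) : Prop :=
  ∃ φ : V × Finset V → ℕ,
    (∀ p, H.IsIncidence p → φ p < k) ∧
    (∀ p q, H.IsIncidence p → H.IsIncidence q → IncAdj p q → φ p ≠ φ q)

/-- χ_I(H): the incidence chromatic number. -/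
noncomputable def incChromaticNumber (H : FinHypergraph V) : ℕ :=
  sInf {k | H.HasIncidenceColoring k}

/-- H is t-quasi-linear: two distinct edges meet in at most t vertices, and two
distinct vertices lie in at most t common edges. -/
def QuasiLinear (H : FinHypergraph V) (t : ℕ) : Prop :=
  (∀ s ∈ H.edges, ∀ s' ∈ H.edges, s ≠ s' → (s ∩ s').card ≤ t) ∧
  (∀ x ∈ H.verts, ∀ y ∈ H.verts, x ≠ y →
    (H.edges.filter fun s => x ∈ s ∧ y ∈ s).card ≤ t)

/-- H is linear: two distinct edges meet in at most one vertex. -/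
def Linear (H : FinHypergraph V) : Prop :=
  ∀ s ∈ H.edges, ∀ s' ∈ H.edges, s ≠ s' → (s ∩ s').card ≤ 1

/-- The Levi graph B(H): bipartite incidence graph between vertices and edges of H. -/
def Levi (H : FinHypergraph V) : SimpleGraph (V ⊕ Finset V) where
  Adj a b :=
    match a, b with
    | Sum.inl x, Sum.inr s => s ∈ H.edges ∧ x ∈ s
    | Sum.inr s, Sum.inl x => s ∈ H.edges ∧ x ∈ s
    | _, _ => False
  symm := by
    exact ⟨by rintro (x | s) (y | t) h <;> exact h⟩
  loopless := by
    exact ⟨by rintro (x | s) h <;> exact h⟩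

end FinHypergraph

/-- One step of GYO-reduction on a pair (vertex set, edge set):
(i) delete a vertex contained in only one edge (together with its occurrence in edges);
(ii) delete an edge contained in another edge;
(iii) delete an edge containing no vertex. -/
inductive GYOStep {V : Type*} [DecidableEq V] :
    Finset V × Finset (Finset V) → Finset V × Finset (Finset V) → Prop
  | delVertex (X : Finset V) (S : Finset (Finset V)) (x : V) (hx : x ∈ X)
      (h : (S.filter fun s => x ∈ s).card ≤ 1) :
      GYOStep (X, S) (X.erase x, S.image fun s => s.erase x)
  | delSubEdge (X : Finset V) (S : Finset (Finset V)) (s s' : Finset V)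
      (hs : s ∈ S) (hs' : s' ∈ S) (hne : s ≠ s') (hsub : s ⊆ s') :
      GYOStep (X, S) (X, S.erase s)
  | delEmptyEdge (X : Finset V) (S : Finset (Finset V)) (h : (∅ : Finset V) ∈ S) :
      GYOStep (X, S) (X, S.erase ∅)

/-- H is α-acyclic: GYO-reduction reduces it to the empty hypergraph. -/
def FinHypergraph.IsAlphaAcyclic {V : Type*} [DecidableEq V] (H : FinHypergraph V) : Prop :=
  Relation.ReflTransGen GYOStep (H.verts, H.edges) (∅, ∅)


private def PLin {V : Type*} [DecidableEq V] (S : Finset (Finset V)) : Prop :=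
  ∀ s ∈ S, ∀ s' ∈ S, s ≠ s' → (s ∩ s').card ≤ 1

private lemma plin_mono {V : Type*} [DecidableEq V] {S T : Finset (Finset V)}
    (h : S ⊆ T) (hT : PLin T) : PLin S :=
  fun s hs s' hs' hne => hT s (h hs) s' (h hs') hne

private lemma plin_step {V : Type*} [DecidableEq V]
    {p q : Finset V × Finset (Finset V)} (h : GYOStep p q) (hp : PLin p.2) : PLin q.2 := by
  cases h with
  | delVertex X S x hx hdeg =>
      intro t ht t' ht' hne
      simp only [Finset.mem_image] at ht ht'
      obtain ⟨s, hs, rfl⟩ := ht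
      obtain ⟨s', hs', rfl⟩ := ht'
      have hne' : s ≠ s' := by rintro rfl; exact hne rfl
      calc ((s.erase x) ∩ (s'.erase x)).card ≤ (s ∩ s').card :=
            Finset.card_le_card
              (Finset.inter_subset_inter (Finset.erase_subset _ _) (Finset.erase_subset _ _))
        _ ≤ 1 := hp s hs s' hs' hne'
  | delSubEdge X S s s' hs hs' hne hsub => exact plin_mono (Finset.erase_subset _ _) hp
  | delEmptyEdge X S h => exact plin_mono (Finset.erase_subset _ _) hp

private lemma gyo_key {V : Type*} [DecidableEq V] {p : Finset V × Finset (Finset V)}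
    (h : Relation.ReflTransGen GYOStep p ((∅ : Finset V), (∅ : Finset (Finset V)))) :
    PLin p.2 → ∀ X' S', X' ⊆ p.1 → S' ⊆ p.2 → (∀ s ∈ S', s ⊆ X') →
      Relation.ReflTransGen GYOStep (X', S') (∅, ∅) := by
  induction h using Relation.ReflTransGen.head_induction_on with
  | refl =>
      intro _ X' S' hX' hS' _
      have h1 : X' = ∅ := Finset.subset_empty.mp hX'
      have h2 : S' = ∅ := Finset.subset_empty.mp hS'
      rw [h1, h2]
  | head hstep hrest ih =>
      intro hlin X' S' hX' hS' hinv
      have hlin' := plin_step hstep hlin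
      cases hstep with
      | delVertex X S x hx hdeg =>
          by_cases hxX' : x ∈ X'
          · have hdeg' : (S'.filter fun s => x ∈ s).card ≤ 1 :=
              le_trans (Finset.card_le_card (Finset.filter_subset_filter _ hS')) hdeg
            refine Relation.ReflTransGen.head (GYOStep.delVertex X' S' x hxX' hdeg') ?_
            refine ih hlin' _ _ (Finset.erase_subset_erase x hX')
              (Finset.image_subset_image hS') ?_
            intro t ht
            simp only [Finset.mem_image] at ht
            obtain ⟨u, hu, rfl⟩ := ht
            exact Finset.erase_subset_erase x (hinv u hu)
          · refine ih hlin' _ _ ?_ ?_ hinv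
            · exact Finset.subset_erase.mpr ⟨hX', hxX'⟩
            · intro s hs
              have hxs : x ∉ s := fun hxs => hxX' (hinv s hs hxs)
              exact Finset.mem_image.mpr ⟨s, hS' hs, Finset.erase_eq_of_notMem hxs⟩
      | delSubEdge X S s s' hs hs' hne hsub =>
          by_cases hsS' : s ∈ S'
          · have hcard : s.card ≤ 1 := by
              have := hlin s hs s' hs' hne
              rwa [Finset.inter_eq_left.mpr hsub] at this
            rcases Nat.le_one_iff_eq_zero_or_eq_one.mp hcard with h0 | h1
            · -- s = ∅
              obtain rfl := Finset.card_eq_zero.mp h0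
              refine Relation.ReflTransGen.head (GYOStep.delEmptyEdge X' S' hsS') ?_
              exact ih hlin' _ _ hX' (Finset.erase_subset_erase _ hS')
                (fun t ht => hinv t (Finset.erase_subset _ _ ht))
            · -- s = {x}
              obtain ⟨x, rfl⟩ := Finset.card_eq_one.mp h1
              by_cases hex : ∃ t ∈ S', t ≠ {x} ∧ x ∈ t
              · obtain ⟨t, ht, htne, hxt⟩ := hex
                refine Relation.ReflTransGen.head
                  (GYOStep.delSubEdge X' S' {x} t hsS' ht (Ne.symm htne)
                    (Finset.singleton_subset_iff.mpr hxt)) ?_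
                exact ih hlin' _ _ hX' (Finset.erase_subset_erase _ hS')
                  (fun u hu => hinv u (Finset.erase_subset _ _ hu))
              · push_neg at hex
                have hxX' : x ∈ X' := hinv _ hsS' (Finset.mem_singleton_self x)
                have hdeg' : (S'.filter fun u => x ∈ u).card ≤ 1 := by
                  refine Finset.card_le_one.mpr ?_
                  intro a ha b hb
                  simp only [Finset.mem_filter] at ha hb
                  have ha' : a = {x} := by
                    by_contra hh; exact hh (hex a ha.1 hh ha.2).elim
                  have hb' : b = {x} := by
                    by_contra hh; exact hh (hex b hb.1 hh hb.2).elim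
                  rw [ha', hb']
                refine Relation.ReflTransGen.head (GYOStep.delVertex X' S' x hxX' hdeg') ?_
                have hempty : (∅ : Finset V) ∈ S'.image fun u => u.erase x :=
                  Finset.mem_image.mpr ⟨{x}, hsS', by simp⟩
                refine Relation.ReflTransGen.head
                  (GYOStep.delEmptyEdge (X'.erase x) _ hempty) ?_
                refine ih hlin' _ _ ((Finset.erase_subset _ _).trans hX') ?_ ?_
                · intro t ht
                  obtain ⟨htne, ht'⟩ := Finset.mem_erase.mp ht
                  obtain ⟨u, hu, rfl⟩ := Finset.mem_image.mp ht'
                  have hune : u ≠ {x} := by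
                    rintro rfl; exact htne (by simp)
                  have hxu : x ∉ u := fun hxu => (hex u hu hune hxu).elim
                  rw [Finset.erase_eq_of_notMem hxu]
                  exact Finset.mem_erase.mpr ⟨hune, hS' hu⟩
                · intro t ht
                  obtain ⟨htne, ht'⟩ := Finset.mem_erase.mp ht
                  obtain ⟨u, hu, rfl⟩ := Finset.mem_image.mp ht'
                  exact Finset.erase_subset_erase x (hinv u hu)
          · exact ih hlin' _ _ hX' (Finset.subset_erase.mpr ⟨hS', hsS'⟩) hinv
      | delEmptyEdge X S h =>
          by_cases hES' : (∅ : Finset V) ∈ S'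
          · refine Relation.ReflTransGen.head (GYOStep.delEmptyEdge X' S' hES') ?_
            exact ih hlin' _ _ hX' (Finset.erase_subset_erase _ hS')
              (fun t ht => hinv t (Finset.erase_subset _ _ ht))
          · exact ih hlin' _ _ hX' (Finset.subset_erase.mpr ⟨hS', hES'⟩) hinv

theorem statement_15 {V : Type*} [DecidableEq V] (H H' : FinHypergraph V)
    (hlin : H.Linear) (hac : H.IsAlphaAcyclic)
    (hv : H'.verts ⊆ H.verts) (he : H'.edges ⊆ H.edges) :
    H'.Linear ∧ H'.IsAlphaAcyclic := by
  constructor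
  · exact fun s hs s' hs' hne => hlin s (he hs) s' (he hs') hne
  · exact gyo_key hac hlin H'.verts H'.edges hv he H'.edge_sub
end
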